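/- arXiv:2507.22135 — 8 statements merged into one kernel-verified Lean document; each statement's English description precedes it below -/
import Mathlib

section
/- For all positive integers p and all real α > 0, the sum over all tuples (m_1,...,m_p) of nonnegative integers with m_1 + 2m_2 + ... + p·m_p = p of (p!/(m_1!···m_p!)) · Γ(α+1)/Γ(α+1-Σ_i m_i) equals Γ(α+p)/Γ(α). -/
open Finset



noncomputable def uP (α : ℝ) (n : ℕ) : ℝ := (∏ j ∈ range n, (α + j)) / n.factorial

lemma uP_zero (α : ℝ) : uP α 0 = 1 := by simp [uP]

lemma prod_shift (α : ℝ) (n : ℕ) :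
    ∏ j ∈ range (n + 1), (α + j) = α * ∏ j ∈ range n, ((α + 1) + j) := by
  rw [Finset.prod_range_succ']
  simp only [Nat.cast_add, Nat.cast_zero, add_zero]
  rw [mul_comm]
  congr 1
  apply Finset.prod_congr rfl
  intro j _
  push_cast
  ring

lemma pascal (β : ℝ) (m : ℕ) : uP (β + 1) m + uP β (m + 1) = uP (β + 1) (m + 1) := by
  unfold uP
  rw [prod_shift β m, Finset.prod_range_succ]
  have h1 : ((m + 1).factorial : ℝ) = (m + 1) * m.factorial := by
    push_cast [Nat.factorial_succ]; ring
  rw [h1]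
  have h2 : (m.factorial : ℝ) ≠ 0 := Nat.cast_ne_zero.mpr m.factorial_ne_zero
  have h3 : ((m : ℝ) + 1) ≠ 0 := by positivity
  field_simp
  ring

lemma hockey (β : ℝ) (m : ℕ) : ∑ i ∈ range (m + 1), uP β i = uP (β + 1) m := by
  induction m with
  | zero => simp [uP]
  | succ m ih => rw [Finset.sum_range_succ, ih, pascal]

lemma wsum (β : ℝ) : ∀ n : ℕ, ∑ i ∈ range (n + 1), ((n + 1 - i : ℕ) : ℝ) * uP β i
    = uP (β + 2) n := by
  intro n
  induction n with
  | zero => simp [uP]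
  | succ n ih =>
    have split : ∀ i ∈ range (n + 2), ((n + 2 - i : ℕ) : ℝ) * uP β i
        = ((n + 1 - i : ℕ) : ℝ) * uP β i + uP β i := by
      intro i hi
      rw [Finset.mem_range] at hi
      have : (n + 2 - i : ℕ) = (n + 1 - i) + 1 := by omega
      rw [this]
      push_cast
      ring
    rw [Finset.sum_congr rfl split, Finset.sum_add_distrib]
    rw [Finset.sum_range_succ ((fun i => ((n + 1 - i : ℕ) : ℝ) * uP β i))]
    simp only [Nat.sub_self, Nat.cast_zero, zero_mul, add_zero]
    rw [ih, hockey]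
    have hp := pascal (β + 1) n
    have e : β + 1 + 1 = β + 2 := by ring
    rw [e] at hp
    linarith

lemma nuP (α : ℝ) (n : ℕ) : ((n + 1 : ℕ) : ℝ) * uP α (n + 1) = α * uP (α + 1) n := by
  unfold uP
  rw [prod_shift]
  have h1 : ((n + 1).factorial : ℝ) = (n + 1) * n.factorial := by
    push_cast [Nat.factorial_succ]; ring
  rw [h1]
  have h2 : (n.factorial : ℝ) ≠ 0 := Nat.cast_ne_zero.mpr n.factorial_ne_zero
  have h3 : ((n : ℝ) + 1) ≠ 0 := by positivity
  push_cast
  field_simp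

lemma gamma_ratio (α : ℝ) (hα : 0 < α) : ∀ k : ℕ,
    Real.Gamma (α + 1) / Real.Gamma (α + 1 - k) = ∏ j ∈ range k, (α - j) := by
  intro k
  induction k with
  | zero => simp [div_self (Real.Gamma_pos_of_pos (by linarith : (0:ℝ) < α + 1)).ne']
  | succ k ih =>
    have hk : α + 1 - (k + 1 : ℕ) = α - k := by push_cast; ring
    rw [hk, Finset.prod_range_succ, ← ih]
    by_cases hak : α = k
    · have h0 : Real.Gamma (α - k) = 0 := by rw [hak, sub_self, Real.Gamma_zero]
      rw [h0, div_zero, hak, sub_self, mul_zero]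
    · have hne : α - (k : ℝ) ≠ 0 := sub_ne_zero.mpr (by exact_mod_cast hak)
      have hrec : Real.Gamma (α + 1 - k) = (α - k) * Real.Gamma (α - k) := by
        have : α + 1 - (k : ℝ) = (α - k) + 1 := by ring
        rw [this, Real.Gamma_add_one hne]
      rw [hrec, mul_comm (α - (k:ℝ)) (Real.Gamma (α - k)), ← div_div,
        div_mul_cancel₀ _ hne]

lemma gamma_rising (α : ℝ) (hα : 0 < α) (p : ℕ) :
    Real.Gamma (α + p) = Real.Gamma α * ∏ j ∈ range p, (α + j) := by
  induction p with
  | zero => simp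
  | succ p ih =>
    have h : α + (p + 1 : ℕ) = (α + p) + 1 := by push_cast; ring
    rw [h, Real.Gamma_add_one (by positivity), ih, Finset.prod_range_succ]
    ring


noncomputable def fallP (α : ℝ) (k : ℕ) : ℝ := ∏ j ∈ range k, (α - j)

lemma fallP_succ (α : ℝ) (k : ℕ) : fallP α (k + 1) = α * fallP (α - 1) k := by
  unfold fallP
  rw [Finset.prod_range_succ']
  simp only [Nat.cast_zero, sub_zero]
  rw [mul_comm]
  congr 1
  apply Finset.prod_congr rfl
  intro j _
  push_cast
  ring

def Sset (p n : ℕ) : Finset (Fin p → ℕ) :=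
  (Fintype.piFinset (fun _ : Fin p => Finset.range (p + 1))).filter
    (fun m => ∑ i : Fin p, ((i : ℕ) + 1) * m i = n)

lemma mem_Sset {p n : ℕ} {m : Fin p → ℕ} :
    m ∈ Sset p n ↔ (∀ i, m i ≤ p) ∧ ∑ i : Fin p, ((i : ℕ) + 1) * m i = n := by
  simp [Sset, Fintype.mem_piFinset, Nat.lt_succ_iff]

lemma Sset_zero (p : ℕ) : Sset p 0 = {fun _ => 0} := by
  ext m
  rw [Finset.mem_singleton, mem_Sset]
  constructor
  · rintro ⟨-, hs⟩
    funext i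
    have := Finset.sum_eq_zero_iff.mp hs i (mem_univ i)
    have := Nat.mul_eq_zero.mp this
    omega
  · rintro rfl
    exact ⟨fun i => Nat.zero_le _, by simp⟩

lemma single_le (p n : ℕ) (m : Fin p → ℕ) (hm : m ∈ Sset p n) (i : Fin p) :
    ((i : ℕ) + 1) * m i ≤ n := by
  rw [← (mem_Sset.mp hm).2]
  exact Finset.single_le_sum (f := fun j : Fin p => ((j : ℕ) + 1) * m j)
    (fun j _ => Nat.zero_le _) (mem_univ i)

lemma vanish (p n : ℕ) (i : Fin p) (hin : n < (i : ℕ) + 1) (F : (Fin p → ℕ) → ℝ) :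
    ∑ m ∈ Sset p n, ((((i : ℕ) + 1) * m i : ℕ) : ℝ) * F m = 0 := by
  apply Finset.sum_eq_zero
  intro m hm
  have h1 := single_le p n m hm i
  have h2 : m i = 0 := by
    by_contra h0
    have h3 : 1 ≤ m i := Nat.one_le_iff_ne_zero.mpr h0
    have h4 : (i : ℕ) + 1 ≤ ((i : ℕ) + 1) * m i := Nat.le_mul_of_pos_right _ (by omega)
    omega
  rw [h2, Nat.mul_zero, Nat.cast_zero, zero_mul]

lemma bij (p n : ℕ) (hnp : n ≤ p) (i : Fin p) (hin : (i : ℕ) + 1 ≤ n) (α : ℝ) :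
    ∑ m ∈ Sset p n, ((((i : ℕ) + 1) * m i : ℕ) : ℝ) *
        ((1 / ∏ j : Fin p, ((m j).factorial : ℝ)) * fallP α (∑ j : Fin p, m j))
    = (((i : ℕ) + 1 : ℕ) : ℝ) * α * ∑ m ∈ Sset p (n - ((i : ℕ) + 1)),
        (1 / ∏ j : Fin p, ((m j).factorial : ℝ)) * fallP (α - 1) (∑ j : Fin p, m j) := by
  rw [Finset.mul_sum]
  have hfilter : ∑ m ∈ (Sset p n).filter (fun m => m i ≠ 0),
      ((((i : ℕ) + 1) * m i : ℕ) : ℝ) *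
        ((1 / ∏ j : Fin p, ((m j).factorial : ℝ)) * fallP α (∑ j : Fin p, m j))
      = ∑ m ∈ Sset p n, ((((i : ℕ) + 1) * m i : ℕ) : ℝ) *
        ((1 / ∏ j : Fin p, ((m j).factorial : ℝ)) * fallP α (∑ j : Fin p, m j)) :=
    Finset.sum_filter_of_ne
      (by intro m _ hF; by_contra h0; apply hF
          rw [h0, Nat.mul_zero, Nat.cast_zero, zero_mul])
  rw [← hfilter]
  apply Finset.sum_nbij' (i := fun m => Function.update m i (m i - 1))
    (j := fun m => Function.update m i (m i + 1))
  · -- forward membership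
    intro m hm
    rw [Finset.mem_filter] at hm
    obtain ⟨hmS, hmi⟩ := hm
    obtain ⟨hbd, hsum⟩ := mem_Sset.mp hmS
    rw [mem_Sset]
    constructor
    · intro j
      rcases eq_or_ne j i with rfl | hj
      · rw [Function.update_self]; exact le_trans (Nat.sub_le _ _) (hbd j)
      · rw [Function.update_of_ne hj]; exact hbd j
    · have e1 : ∑ j : Fin p, ((j : ℕ) + 1) * m j
          = ((i : ℕ) + 1) * m i + ∑ j ∈ univ.erase i, ((j : ℕ) + 1) * m j :=
        (Finset.add_sum_erase univ _ (mem_univ i)).symm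
      have e2 : ∑ j : Fin p, ((j : ℕ) + 1) * (Function.update m i (m i - 1)) j
          = ((i : ℕ) + 1) * (m i - 1) + ∑ j ∈ univ.erase i, ((j : ℕ) + 1) * m j := by
        rw [← Finset.add_sum_erase univ _ (mem_univ i), Function.update_self]
        congr 1
        apply Finset.sum_congr rfl
        intro j hj
        rw [Function.update_of_ne (Finset.ne_of_mem_erase hj)]
      rw [e2]
      rw [hsum] at e1
      have hmi1 : 1 ≤ m i := Nat.one_le_iff_ne_zero.mpr hmi
      have : ((i : ℕ) + 1) * (m i - 1) + ((i : ℕ) + 1) = ((i : ℕ) + 1) * m i := by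
        rw [← Nat.mul_succ]
        congr 1
        omega
      omega
  · -- backward membership
    intro m hm
    obtain ⟨hbd, hsum⟩ := mem_Sset.mp hm
    have hle := single_le p _ m hm i
    rw [Finset.mem_filter]
    refine ⟨mem_Sset.mpr ⟨?_, ?_⟩, ?_⟩
    · intro j
      rcases eq_or_ne j i with rfl | hj
      · rw [Function.update_self]
        have : m j ≤ n - ((j : ℕ) + 1) := le_trans (Nat.le_mul_of_pos_left _ (Nat.succ_pos _)) hle
        omega
      · rw [Function.update_of_ne hj]; exact hbd j
    · have e2 : ∑ j : Fin p, ((j : ℕ) + 1) * (Function.update m i (m i + 1)) j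
          = ((i : ℕ) + 1) * (m i + 1) + ∑ j ∈ univ.erase i, ((j : ℕ) + 1) * m j := by
        rw [← Finset.add_sum_erase univ _ (mem_univ i), Function.update_self]
        congr 1
        apply Finset.sum_congr rfl
        intro j hj
        rw [Function.update_of_ne (Finset.ne_of_mem_erase hj)]
      have e1 : ∑ j : Fin p, ((j : ℕ) + 1) * m j
          = ((i : ℕ) + 1) * m i + ∑ j ∈ univ.erase i, ((j : ℕ) + 1) * m j :=
        (Finset.add_sum_erase univ _ (mem_univ i)).symm
      rw [e2]
      rw [hsum] at e1
      rw [Nat.mul_succ]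
      omega
    · rw [Function.update_self]; omega
  · -- left inverse
    intro m hm
    rw [Finset.mem_filter] at hm
    funext j
    rcases eq_or_ne j i with rfl | hj
    · rw [Function.update_self, Function.update_self]
      have := hm.2
      omega
    · rw [Function.update_of_ne hj, Function.update_of_ne hj]
  · -- right inverse
    intro m hm
    funext j
    rcases eq_or_ne j i with rfl | hj
    · rw [Function.update_self, Function.update_self]
      omega
    · rw [Function.update_of_ne hj, Function.update_of_ne hj]
  · -- term equality
    intro m hm
    rw [Finset.mem_filter] at hm
    obtain ⟨hmS, hmi⟩ := hm
    have hmi1 : 1 ≤ m i := Nat.one_le_iff_ne_zero.mpr hmi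
    -- products
    have eP : ∏ j : Fin p, ((m j).factorial : ℝ)
        = (m i : ℝ) * ∏ j : Fin p, (((Function.update m i (m i - 1)) j).factorial : ℝ) := by
      rw [← Finset.mul_prod_erase univ _ (mem_univ i),
          ← Finset.mul_prod_erase univ
            (f := fun j => (((Function.update m i (m i - 1)) j).factorial : ℝ)) (mem_univ i)]
      have : ∏ j ∈ univ.erase i, (((Function.update m i (m i - 1)) j).factorial : ℝ)
          = ∏ j ∈ univ.erase i, ((m j).factorial : ℝ) := by
        apply Finset.prod_congr rfl
        intro j hj
        rw [Function.update_of_ne (Finset.ne_of_mem_erase hj)]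
      rw [this, Function.update_self, ← mul_assoc]
      congr 1
      have : m i = (m i - 1) + 1 := by omega
      rw [this, Nat.factorial_succ]
      push_cast
      ring
    -- sums
    have eK : ∑ j : Fin p, m j = (∑ j : Fin p, (Function.update m i (m i - 1)) j) + 1 := by
      rw [← Finset.add_sum_erase univ _ (mem_univ i),
          ← Finset.add_sum_erase univ (f := fun j => (Function.update m i (m i - 1)) j)
            (mem_univ i), Function.update_self]
      have : ∑ j ∈ univ.erase i, (Function.update m i (m i - 1)) j
          = ∑ j ∈ univ.erase i, m j := by
        apply Finset.sum_congr rfl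
        intro j hj
        rw [Function.update_of_ne (Finset.ne_of_mem_erase hj)]
      rw [this]
      omega
    rw [eK, fallP_succ, eP]
    have hmiR : (m i : ℝ) ≠ 0 := Nat.cast_ne_zero.mpr hmi
    have hPne : (∏ j : Fin p, (((Function.update m i (m i - 1)) j).factorial : ℝ)) ≠ 0 := by
      apply Finset.prod_ne_zero_iff.mpr
      intro j _
      exact Nat.cast_ne_zero.mpr (Nat.factorial_ne_zero _)
    push_cast
    field_simp

lemma key (p : ℕ) : ∀ n, n ≤ p → ∀ α : ℝ,
    ∑ m ∈ Sset p n, (1 / ∏ j : Fin p, ((m j).factorial : ℝ)) * fallP α (∑ j : Fin p, m j)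
      = uP α n := by
  intro n
  induction n using Nat.strong_induction_on with
  | _ n ih =>
    intro hnp α
    rcases Nat.eq_zero_or_pos n with rfl | hpos
    · rw [Sset_zero]
      simp [fallP, uP]
    · obtain ⟨n', rfl⟩ : ∃ n', n = n' + 1 := ⟨n - 1, by omega⟩
      have hne : (((n' + 1 : ℕ) : ℝ)) ≠ 0 := by positivity
      apply mul_left_cancel₀ hne
      have hL : ((n' + 1 : ℕ) : ℝ) *
          ∑ m ∈ Sset p (n' + 1), (1 / ∏ j : Fin p, ((m j).factorial : ℝ)) *
            fallP α (∑ j : Fin p, m j)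
          = α * uP (α + 1) n' := by
        calc ((n' + 1 : ℕ) : ℝ) *
            ∑ m ∈ Sset p (n' + 1), (1 / ∏ j : Fin p, ((m j).factorial : ℝ)) *
              fallP α (∑ j : Fin p, m j)
            = ∑ m ∈ Sset p (n' + 1), ∑ i : Fin p, ((((i : ℕ) + 1) * m i : ℕ) : ℝ) *
              ((1 / ∏ j : Fin p, ((m j).factorial : ℝ)) * fallP α (∑ j : Fin p, m j)) := by
              rw [Finset.mul_sum]
              refine Finset.sum_congr rfl fun m hm => ?_
              rw [← Finset.sum_mul]
              congr 1
              rw [← Nat.cast_sum]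
              exact (Nat.cast_inj.mpr ((mem_Sset.mp hm).2)).symm
          _ = ∑ i : Fin p, ∑ m ∈ Sset p (n' + 1), ((((i : ℕ) + 1) * m i : ℕ) : ℝ) *
              ((1 / ∏ j : Fin p, ((m j).factorial : ℝ)) * fallP α (∑ j : Fin p, m j)) :=
              Finset.sum_comm
          _ = ∑ i : Fin p, (if (i : ℕ) + 1 ≤ n' + 1 then
                (((i : ℕ) + 1 : ℕ) : ℝ) * α * uP (α - 1) ((n' + 1) - ((i : ℕ) + 1))
              else 0) := by
              refine Finset.sum_congr rfl fun i _ => ?_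
              by_cases hin : (i : ℕ) + 1 ≤ n' + 1
              · rw [if_pos hin, bij p (n' + 1) hnp i hin α,
                  ih ((n' + 1) - ((i : ℕ) + 1)) (by omega) (by omega) (α - 1)]
              · rw [if_neg hin, vanish p (n' + 1) i (by omega)]
          _ = ∑ i ∈ range p, (if i + 1 ≤ n' + 1 then
                ((i + 1 : ℕ) : ℝ) * α * uP (α - 1) ((n' + 1) - (i + 1)) else 0) :=
              Fin.sum_univ_eq_sum_range (fun i => if i + 1 ≤ n' + 1 then
                ((i + 1 : ℕ) : ℝ) * α * uP (α - 1) ((n' + 1) - (i + 1)) else 0) p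
          _ = ∑ i ∈ range (n' + 1), (if i + 1 ≤ n' + 1 then
                ((i + 1 : ℕ) : ℝ) * α * uP (α - 1) ((n' + 1) - (i + 1)) else 0) :=
              (Finset.sum_subset (Finset.range_subset_range.mpr hnp)
                (fun x _ hx => if_neg (by rw [Finset.mem_range] at hx; omega))).symm
          _ = α * ∑ i ∈ range (n' + 1), ((i + 1 : ℕ) : ℝ) * uP (α - 1) (n' - i) := by
              rw [Finset.mul_sum]
              refine Finset.sum_congr rfl fun i hi => ?_
              rw [Finset.mem_range] at hi
              rw [if_pos (by omega)]
              have : (n' + 1) - (i + 1) = n' - i := by omega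
              rw [this]
              ring
          _ = α * ∑ i ∈ range (n' + 1), ((n' + 1 - i : ℕ) : ℝ) * uP (α - 1) i := by
              congr 1
              have hre := Finset.sum_range_reflect
                (fun i => ((i + 1 : ℕ) : ℝ) * uP (α - 1) (n' - i)) (n' + 1)
              rw [← hre]
              refine Finset.sum_congr rfl fun j hj => ?_
              rw [Finset.mem_range] at hj
              have h1 : n' + 1 - 1 - j = n' - j := by omega
              have h2 : n' - (n' - j) = j := by omega
              have h3 : n' - j + 1 = n' + 1 - j := by omega
              rw [h1, h2, h3]
          _ = α * uP (α + 1) n' := by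
              rw [wsum (α - 1) n']
              congr 1
              ring
      rw [hL, nuP]
  

/-- For all positive integers `p` and all real `α > 0`, the sum over all tuples
`(m_1,...,m_p)` of nonnegative integers with `m_1 + 2 m_2 + ... + p m_p = p` of
`(p!/(m_1!⋯m_p!)) · Γ(α+1)/Γ(α+1-Σ m_i)` equals `Γ(α+p)/Γ(α)`. -/
theorem stmt_0 (p : ℕ) (hp : 0 < p) (α : ℝ) (hα : 0 < α) :
    ∑ m ∈ (Fintype.piFinset (fun _ : Fin p => Finset.range (p + 1))).filter
        (fun m => ∑ i : Fin p, ((i : ℕ) + 1) * m i = p),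
      ((p.factorial : ℝ) / ∏ i : Fin p, ((m i).factorial : ℝ)) *
        (Real.Gamma (α + 1) / Real.Gamma (α + 1 - (∑ i : Fin p, m i : ℕ)))
      = Real.Gamma (α + p) / Real.Gamma α := by
  have hset : (Fintype.piFinset (fun _ : Fin p => Finset.range (p + 1))).filter
      (fun m => ∑ i : Fin p, ((i : ℕ) + 1) * m i = p) = Sset p p := rfl
  rw [hset]
  have h1 : ∀ m ∈ Sset p p,
      ((p.factorial : ℝ) / ∏ i : Fin p, ((m i).factorial : ℝ)) *
        (Real.Gamma (α + 1) / Real.Gamma (α + 1 - (∑ i : Fin p, m i : ℕ)))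
      = (p.factorial : ℝ) * ((1 / ∏ j : Fin p, ((m j).factorial : ℝ)) *
          fallP α (∑ j : Fin p, m j)) := by
    intro m _
    rw [gamma_ratio α hα (∑ i : Fin p, m i)]
    unfold fallP
    ring
  rw [Finset.sum_congr rfl h1, ← Finset.mul_sum, key p p le_rfl α]
  unfold uP
  rw [gamma_rising α hα p]
  have hΓ : Real.Gamma α ≠ 0 := (Real.Gamma_pos_of_pos hα).ne'
  have hfac : (p.factorial : ℝ) ≠ 0 := Nat.cast_ne_zero.mpr p.factorial_ne_zero
  field_simp
end

section
/- Let x = (x_1,...,x_n) be a sequence of integers each at least -1 with x_1 + ... + x_n = -k for some 1 ≤ k ≤ n. Among the n cyclic shifts of x, exactly k of them have all partial sums strictly greater than -k except the final one, i.e., exactly k cyclic shifts hit -k for the first time at time n. -/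
open Finset
open scoped Classical

namespace CycleAux

variable (n : ℕ) (x : ℕ → ℤ)

def cyc (m : ℕ) : ℤ := ∑ j ∈ Finset.range m, x (j % n)

def cmin : ℕ → ℤ
  | 0 => 0
  | m + 1 => min (cmin m) (cyc n x (m + 1))

lemma cyc_zero : cyc n x 0 = 0 := by simp [cyc]

lemma cyc_succ (m : ℕ) : cyc n x (m + 1) = cyc n x m + x (m % n) :=
  Finset.sum_range_succ _ _

lemma cmin_succ (m : ℕ) : cmin n x (m + 1) = min (cmin n x m) (cyc n x (m + 1)) := rfl

lemma cyc_add (m : ℕ) : cyc n x (m + n) = cyc n x m + cyc n x n := by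
  induction m with
  | zero => simp [cyc_zero]
  | succ m ih =>
    have h : m + 1 + n = (m + n) + 1 := by ring
    rw [h, cyc_succ, ih, Nat.add_mod_right, cyc_succ]; ring

lemma cmin_le {m j : ℕ} (hj : j ≤ m) : cmin n x m ≤ cyc n x j := by
  induction m with
  | zero => simp_all [cmin, cyc_zero]
  | succ m ih =>
    rcases Nat.lt_or_ge j (m + 1) with h | h
    · exact le_trans (min_le_left _ _) (ih (Nat.lt_succ_iff.mp h))
    · have : j = m + 1 := le_antisymm hj h
      subst this; exact min_le_right _ _

lemma cmin_exists (m : ℕ) : ∃ j ≤ m, cmin n x m = cyc n x j := by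
  induction m with
  | zero => exact ⟨0, le_refl 0, by simp [cmin, cyc_zero]⟩
  | succ m ih =>
    obtain ⟨j, hj, hje⟩ := ih
    rcases min_cases (cmin n x m) (cyc n x (m + 1)) with ⟨h1, _⟩ | ⟨h1, _⟩
    · exact ⟨j, le_trans hj (Nat.le_succ m), by rw [cmin_succ, h1, hje]⟩
    · exact ⟨m + 1, le_refl _, by rw [cmin_succ, h1]⟩

variable (hn : 0 < n) (hx : ∀ j < n, -1 ≤ x j)

include hn hx in
lemma cyc_ge (m : ℕ) : cyc n x m - 1 ≤ cyc n x (m + 1) := by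
  have := hx (m % n) (Nat.mod_lt _ hn)
  rw [cyc_succ]; linarith

include hn hx in
lemma cmin_succ_ge (m : ℕ) : cmin n x m - 1 ≤ cmin n x (m + 1) := by
  rw [cmin_succ]
  refine le_min (by linarith) ?_
  have h1 := cmin_le n x (le_refl m)
  have h2 := cyc_ge n x hn hx m
  linarith

include hn hx in
lemma indicator_eq (m : ℕ) :
    (if cyc n x (m + 1) < cmin n x m then (1 : ℤ) else 0)
      = cmin n x m - cmin n x (m + 1) := by
  by_cases h : cyc n x (m + 1) < cmin n x m
  · rw [if_pos h]
    have h1 : cmin n x (m + 1) = cyc n x (m + 1) := by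
      rw [cmin_succ]; exact min_eq_right h.le
    have h2 := cmin_succ_ge n x hn hx m
    omega
  · rw [if_neg h]
    have h1 : cmin n x (m + 1) = cmin n x m := by
      rw [cmin_succ]; exact min_eq_left (not_lt.mp h)
    omega

lemma record_iff (i : ℕ) :
    cyc n x (i + 1) < cmin n x i ↔ ∀ t ≤ i, cyc n x (i + 1) < cyc n x t := by
  constructor
  · intro h t ht
    exact lt_of_lt_of_le h (cmin_le n x ht)
  · intro h
    obtain ⟨j, hj, hje⟩ := cmin_exists n x i
    rw [hje]; exact h j hj

variable {k : ℕ} (hcycn : cyc n x n = -(k : ℤ))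

include hcycn in
lemma cmin_shift (m : ℕ) (hm : n ≤ m + 1) : cmin n x (m + n) = cmin n x m - k := by
  apply le_antisymm
  · obtain ⟨j, hj, hje⟩ := cmin_exists n x m
    have h1 : cmin n x (m + n) ≤ cyc n x (j + n) :=
      cmin_le n x (by omega)
    rw [cyc_add, hcycn] at h1
    rw [hje]; linarith
  · obtain ⟨j, hj, hje⟩ := cmin_exists n x (m + n)
    rcases Nat.lt_or_ge j n with h | h
    · have h1 : cmin n x m ≤ cyc n x j := cmin_le n x (by omega)
      rw [hje]
      have : (0 : ℤ) ≤ k := Int.natCast_nonneg k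
      linarith
    · have h2 : j - n + n = j := by omega
      have h1 : cmin n x m ≤ cyc n x (j - n) := cmin_le n x (by omega)
      have h3 : cyc n x j = cyc n x (j - n) + cyc n x n := by
        rw [← h2, cyc_add]; rw [h2]
      rw [hje, h3, hcycn]; linarith

end CycleAux

open CycleAux

/-- Cycle lemma (Dvoretzky–Motzkin): if `x_0,...,x_{n-1}` are integers `≥ -1` with total sum
`-k`, `1 ≤ k ≤ n`, then exactly `k` of the `n` cyclic shifts of `x` hit `-k` for the first
time at time `n`, i.e. have all proper partial sums `> -k`. -/
theorem stmt_2 (n k : ℕ) (hk : 1 ≤ k) (hkn : k ≤ n) (x : ℕ → ℤ)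
    (hx : ∀ j < n, -1 ≤ x j)
    (hsum : ∑ j ∈ Finset.range n, x j = -(k : ℤ)) :
    ((Finset.range n).filter (fun i =>
        ∀ m, 0 < m → m < n →
          -(k : ℤ) < ∑ j ∈ Finset.range m, x ((i + j) % n))).card = k := by
  have hn : 0 < n := le_trans hk hkn
  have hcycn : cyc n x n = -(k : ℤ) := by
    rw [cyc, ← hsum]
    exact Finset.sum_congr rfl fun j hj => by
      rw [Nat.mod_eq_of_lt (Finset.mem_range.mp hj)]
  -- shifted partial sums
  have hshift : ∀ i m : ℕ, ∑ j ∈ Finset.range m, x ((i + j) % n)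
      = cyc n x (i + m) - cyc n x i := by
    intro i m
    have : cyc n x (i + m) = cyc n x i + ∑ j ∈ Finset.range m, x ((i + j) % n) := by
      rw [cyc, cyc, Finset.sum_range_add]
    linarith
  set p := n - 1 with hp
  have hpn : p + 1 = n := by omega
  -- equivalence of filter conditions
  have hfilter : (Finset.range n).filter (fun i =>
        ∀ m, 0 < m → m < n →
          -(k : ℤ) < ∑ j ∈ Finset.range m, x ((i + j) % n))
      = (Finset.range n).filter (fun i =>
          cyc n x (i + p + 1) < cmin n x (i + p)) := by
    apply Finset.filter_congr
    intro i hi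
    have hilt : i < n := Finset.mem_range.mp hi
    have hin : i + p + 1 = i + n := by omega
    rw [record_iff, hin]
    constructor
    · intro h t ht
      have ht' : t ≤ i + p := ht
      rcases Nat.lt_or_ge i t with hit | hit
      · -- i < t ≤ i + p < i + n
        have hm := h (t - i) (by omega) (by omega)
        rw [hshift] at hm
        have : i + (t - i) = t := by omega
        rw [this] at hm
        have := cyc_add n x i
        rw [hcycn] at this
        linarith
      · -- t ≤ i
        rcases Nat.eq_or_lt_of_le hit with heq | hlt
        · subst heq
          have := cyc_add n x t
          rw [hcycn] at this
          have hk' : (1 : ℤ) ≤ k := by exact_mod_cast hk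
          linarith
        · -- t < i : use m = t + n - i
          have hm := h (t + n - i) (by omega) (by omega)
          rw [hshift] at hm
          have he : i + (t + n - i) = t + n := by omega
          rw [he] at hm
          have h1 := cyc_add n x i
          have h2 := cyc_add n x t
          rw [hcycn] at h1 h2
          have hk' : (1 : ℤ) ≤ k := by exact_mod_cast hk
          linarith
    · intro h m hm0 hmn
      rw [hshift]
      have h1 := cyc_add n x i
      rw [hcycn] at h1
      have := h (i + m) (by omega)
      linarith
  rw [hfilter]
  -- count records by telescoping
  have hcard : ((((Finset.range n).filter (fun i =>
      cyc n x (i + p + 1) < cmin n x (i + p))).card : ℤ)) = (k : ℤ) := by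
    rw [← Finset.sum_boole]
    have : ∀ i ∈ Finset.range n,
        (if cyc n x (i + p + 1) < cmin n x (i + p) then (1 : ℤ) else 0)
          = cmin n x (p + i) - cmin n x (p + (i + 1)) := by
      intro i _
      have h1 : i + p = p + i := by omega
      have h2 : p + (i + 1) = (p + i) + 1 := by omega
      rw [h2, ← h1, indicator_eq n x hn hx]
    rw [Finset.sum_congr rfl this, Finset.sum_range_sub' (fun i => cmin n x (p + i))]
    have hs := cmin_shift n x hcycn p (by omega)
    rw [Nat.add_zero, hs]
    ring
  exact_mod_cast hcard
end

section
/- Let X_1,...,X_n be i.i.d. integer-valued random variables taking values in {-1, 0, 1, 2, ...}, let W_j = X_1+...+X_j, and let A ⊆ ℤ^n be invariant under cyclic permutations of coordinates. Then P((X_1,...,X_n) ∈ A, W_n = -1, W_i ≥ 0 for all 1 ≤ i ≤ n-1) = (1/n) · P((X_1,...,X_n) ∈ A, W_n = -1). -/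
/-!
Extend `v` periodically and let `S k` be the sum of its first `k` terms, so that
`S (k + n) = S k - 1`. The partial sums of the shift starting at `i` are `S (i + m) - S i`, hence
that shift has nonnegative partial sums exactly when `i` is the first minimiser of `S` on
`[0, n)`, i.e. minimises `(S i, i)` lexicographically: this is unique (cycle lemma). The law of an
i.i.d. vector is invariant under cyclic shifts, and the event without the partial-sum condition
is the disjoint union of the `n` shifted copies of the event with it.
-/

open MeasureTheory ProbabilityTheory Finset

theorem forall_le_apply_add_iff_toLex_le {n : ℕ} {S : ℕ → ℤ}
    (hS : ∀ k, S (k + n) = S k - 1) {i : ℕ} (hi : i < n) :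
    (∀ m, 1 ≤ m → m ≤ n - 1 → S i ≤ S (i + m)) ↔
      ∀ j < n, toLex (S i, i) ≤ toLex (S j, j) := by
  simp only [Prod.Lex.toLex_le_toLex]
  constructor
  · intro h j hj
    rcases lt_or_ge j i with hji | hij
    · have := h (n + j - i) (by omega) (by omega)
      rw [show i + (n + j - i) = j + n by omega, hS] at this
      omega
    · obtain rfl | hij := hij.eq_or_lt
      · exact .inr ⟨rfl, le_rfl⟩
      · have := h (j - i) (by omega) (by omega)
        rw [Nat.add_sub_cancel' hij.le] at this
        omega
  · intro h m hm1 hmn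
    rcases lt_or_ge (i + m) n with hlt | hge
    · have := h _ hlt
      omega
    · have := h (i + m - n) (by omega)
      rw [show i + m = (i + m - n) + n by omega, hS]
      omega

theorem measurePreserving_comp_equiv {ι β : Type*} [Fintype ι] [MeasurableSpace β]
    (m : Measure β) [SigmaFinite m] (e : ι ≃ ι) :
    MeasurePreserving (fun v : ι → β => v ∘ e)
      (Measure.pi fun _ => m) (Measure.pi fun _ => m) := by
  convert measurePreserving_piCongrLeft (fun _ : ι => m) e.symm using 1
  ext v i
  simp [MeasurableEquiv.coe_piCongrLeft, Equiv.piCongrLeft_apply_eq_cast]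

theorem measure_eq_card_mul_of_existsUnique {α ι : Type*} [MeasurableSpace α] [Fintype ι]
    {ν : Measure α} {σ : ι → α → α} (hσ : ∀ i, MeasurePreserving (σ i) ν ν)
    {B C : Set α} (hB : MeasurableSet B)
    (hC : ∀ x ∈ C, ∃! i, σ i x ∈ B) (hBC : ∀ i x, σ i x ∈ B → x ∈ C) :
    ν C = Fintype.card ι * ν B := by
  have hCeq : C = ⋃ i, σ i ⁻¹' B := by
    ext x
    simp only [Set.mem_iUnion, Set.mem_preimage]
    exact ⟨fun hx => (hC x hx).exists, fun ⟨i, hi⟩ => hBC i x hi⟩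
  have hdisj : Pairwise (Function.onFun Disjoint fun i => σ i ⁻¹' B) := fun i j hij =>
    Set.disjoint_left.2 fun x hi hj => hij ((hC x (hBC i x hi)).unique hi hj)
  rw [hCeq, measure_iUnion hdisj fun i => (hσ i).measurable hB, tsum_fintype]
  simp [fun i => (hσ i).measure_preimage hB.nullMeasurableSet]

open Fin.NatCast

section CyclicShift

variable {n : ℕ} [NeZero n]

def cyclicShift {α : Type*} (i : Fin n) (v : Fin n → α) : Fin n → α := fun j => v (i + j)

theorem cyclicShift_cyclicShift {α : Type*} (i j : Fin n) (v : Fin n → α) :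
    cyclicShift i (cyclicShift j v) = cyclicShift (j + i) v := by
  funext k
  simp [cyclicShift, add_assoc]

theorem cyclicShift_zero {α : Type*} (v : Fin n → α) : cyclicShift 0 v = v := by
  funext k
  simp [cyclicShift]

theorem cyclicShift_mem_iff {α : Type*} {A : Set (Fin n → α)}
    (hA : ∀ v ∈ A, ∀ i : Fin n, cyclicShift i v ∈ A) (i : Fin n) (v : Fin n → α) :
    cyclicShift i v ∈ A ↔ v ∈ A := by
  refine ⟨fun h => ?_, fun h => hA v h i⟩
  simpa [cyclicShift_cyclicShift, cyclicShift_zero] using hA _ h (-i)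

theorem sum_cyclicShift {M : Type*} [AddCommMonoid M] (i : Fin n) (v : Fin n → M) :
    ∑ j, cyclicShift i v j = ∑ j, v j :=
  Equiv.sum_comp (Equiv.addLeft i) v

theorem measurePreserving_cyclicShift {β : Type*} [MeasurableSpace β] (m : Measure β)
    [SigmaFinite m] (i : Fin n) :
    MeasurePreserving (cyclicShift i) (Measure.pi fun _ : Fin n => m) (Measure.pi fun _ => m) :=
  measurePreserving_comp_equiv m (Equiv.addLeft i)

theorem sum_ite_lt_eq_sum_range {M : Type*} [AddCommMonoid M] (w : Fin n → M) {m : ℕ}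
    (hm : m ≤ n) :
    ∑ j : Fin n, (if (j : ℕ) < m then w j else 0) = ∑ t ∈ range m, w t := by
  have h := Fin.sum_univ_eq_sum_range (fun t => if t < m then w t else 0) n
  simp only [Fin.cast_val_eq_self] at h
  rw [h, ← sum_filter]
  congr 1
  ext t
  simp only [mem_filter, mem_range]
  omega

def PartialSumsNonneg (w : Fin n → ℤ) : Prop :=
  ∀ m : ℕ, 1 ≤ m → m ≤ n - 1 → 0 ≤ ∑ j : Fin n, if (j : ℕ) < m then w j else 0

def cyclicPartialSum (v : Fin n → ℤ) (k : ℕ) : ℤ := ∑ t ∈ range k, v t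

theorem cyclicPartialSum_add (v : Fin n → ℤ) (k m : ℕ) :
    cyclicPartialSum v (k + m) = cyclicPartialSum v k + ∑ t ∈ range m, cyclicShift k v t := by
  simp [cyclicPartialSum, sum_range_add, cyclicShift]

theorem cyclicPartialSum_add_self (v : Fin n → ℤ) (k : ℕ) :
    cyclicPartialSum v (k + n) = cyclicPartialSum v k + ∑ i, v i := by
  rw [cyclicPartialSum_add, ← sum_cyclicShift (k : Fin n) v,
    ← Fin.sum_univ_eq_sum_range (fun t => cyclicShift (k : Fin n) v t)]
  simp

theorem partialSumsNonneg_cyclicShift_iff (v : Fin n → ℤ) (i : Fin n) :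
    PartialSumsNonneg (cyclicShift i v) ↔
      ∀ m, 1 ≤ m → m ≤ n - 1 → cyclicPartialSum v i ≤ cyclicPartialSum v (i + m) := by
  refine forall_congr' fun m => imp_congr_right fun _ => imp_congr_right fun hm => ?_
  rw [sum_ite_lt_eq_sum_range _ (by omega), cyclicPartialSum_add, Fin.cast_val_eq_self]
  omega

theorem partialSumsNonneg_cyclicShift_iff_toLex_le (v : Fin n → ℤ) (hsum : ∑ i, v i = -1)
    (i : Fin n) :
    PartialSumsNonneg (cyclicShift i v) ↔ ∀ j : Fin n,
      toLex (cyclicPartialSum v i, (i : ℕ)) ≤ toLex (cyclicPartialSum v j, (j : ℕ)) := by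
  have hS k : cyclicPartialSum v (k + n) = cyclicPartialSum v k - 1 := by
    rw [cyclicPartialSum_add_self, hsum, ← sub_eq_add_neg]
  rw [partialSumsNonneg_cyclicShift_iff, forall_le_apply_add_iff_toLex_le hS i.isLt,
    Fin.forall_iff]

theorem existsUnique_partialSumsNonneg_cyclicShift (v : Fin n → ℤ) (hsum : ∑ i, v i = -1) :
    ∃! i : Fin n, PartialSumsNonneg (cyclicShift i v) := by
  simp only [partialSumsNonneg_cyclicShift_iff_toLex_le v hsum]
  set key : Fin n → ℤ ×ₗ ℕ := fun j => toLex (cyclicPartialSum v j, (j : ℕ))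
  have key_injective : Function.Injective key := fun i j h => Fin.ext (congrArg (·.2) h :)
  obtain ⟨i, -, hi⟩ := exists_min_image univ key univ_nonempty
  exact ⟨i, fun j => hi j (mem_univ j),
    fun j hj => key_injective (le_antisymm (hj i) (hi j (mem_univ j)))⟩

end CyclicShift

theorem stmt_3_general {Ω : Type*} [MeasurableSpace Ω] (μ : Measure Ω) [IsProbabilityMeasure μ]
    (n : ℕ) (hn : 0 < n) (X : Fin n → Ω → ℤ)
    (hmeas : ∀ i, Measurable (X i))
    (hindep : iIndepFun X μ)
    (hident : ∀ i j, MeasureTheory.Measure.map (X i) μ = MeasureTheory.Measure.map (X j) μ)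
    (A : Set (Fin n → ℤ))
    (hA : ∀ v ∈ A, ∀ i : Fin n, (fun j => v (i + j)) ∈ A) :
    μ {ω | (fun i => X i ω) ∈ A ∧ (∑ i : Fin n, X i ω) = -1 ∧
        ∀ m : ℕ, 1 ≤ m → m ≤ n - 1 →
          0 ≤ ∑ j : Fin n, if (j : ℕ) < m then X j ω else 0}
      = (n : ENNReal)⁻¹ * μ {ω | (fun i => X i ω) ∈ A ∧ (∑ i : Fin n, X i ω) = -1} := by
  have : NeZero n := ⟨hn.ne'⟩
  set T : Ω → Fin n → ℤ := fun ω i => X i ω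
  set B : Set (Fin n → ℤ) := {v | v ∈ A ∧ ∑ i, v i = -1 ∧ PartialSumsNonneg v}
  set C : Set (Fin n → ℤ) := {v | v ∈ A ∧ ∑ i, v i = -1}
  have hlaw : μ.map T = Measure.pi fun _ => μ.map (X 0) := by
    rw [hindep.map_fun_eq_pi_map fun i => (hmeas i).aemeasurable]
    simp_rw [hident _ 0]
  have hshift_mem i v :
      cyclicShift i v ∈ B ↔ v ∈ C ∧ PartialSumsNonneg (cyclicShift i v) := by
    simp only [B, C, Set.mem_ofPred_eq, cyclicShift_mem_iff hA, sum_cyclicShift, and_assoc]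
  have hcount : μ.map T C = n * μ.map T B := by
    rw [hlaw]
    simpa using measure_eq_card_mul_of_existsUnique (measurePreserving_cyclicShift _)
      .of_discrete
      (fun v hv => by
        simpa [hshift_mem, hv] using existsUnique_partialSumsNonneg_cyclicShift v hv.2)
      (fun i v h => ((hshift_mem i v).1 h).1)
  rw [Measure.map_apply (measurable_pi_lambda _ hmeas) .of_discrete,
    Measure.map_apply (measurable_pi_lambda _ hmeas) .of_discrete] at hcount
  change μ (T ⁻¹' B) = (n : ENNReal)⁻¹ * μ (T ⁻¹' C)
  rw [hcount, ENNReal.inv_mul_cancel_left (Nat.cast_ne_zero.2 hn.ne') (ENNReal.natCast_ne_top n)]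

/-- Probabilistic cycle lemma: if `X_1,...,X_n` are i.i.d. integer random variables with
values in `{-1,0,1,...}`, `W_m` their partial sums, and `A ⊆ ℤ^n` is invariant under cyclic
permutation of coordinates, then
`P((X_i) ∈ A, W_n = -1, W_m ≥ 0 ∀ 1 ≤ m ≤ n-1) = (1/n) P((X_i) ∈ A, W_n = -1)`. -/
theorem stmt_3 {Ω : Type*} [MeasurableSpace Ω] (μ : Measure Ω) [IsProbabilityMeasure μ]
    (n : ℕ) (hn : 0 < n) (X : Fin n → Ω → ℤ)
    (hmeas : ∀ i, Measurable (X i))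
    (hindep : iIndepFun X μ)
    (hident : ∀ i j, MeasureTheory.Measure.map (X i) μ = MeasureTheory.Measure.map (X j) μ)
    (hval : ∀ i ω, -1 ≤ X i ω)
    (A : Set (Fin n → ℤ))
    (hA : ∀ v ∈ A, ∀ i : Fin n, (fun j => v (i + j)) ∈ A) :
    μ {ω | (fun i => X i ω) ∈ A ∧ (∑ i : Fin n, X i ω) = -1 ∧
        ∀ m : ℕ, 1 ≤ m → m ≤ n - 1 →
          0 ≤ ∑ j : Fin n, if (j : ℕ) < m then X j ω else 0}
      = (n : ENNReal)⁻¹ * μ {ω | (fun i => X i ω) ∈ A ∧ (∑ i : Fin n, X i ω) = -1} :=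
  stmt_3_general μ n hn X hmeas hindep hident A hA
end

section
/- Let m ≥ 2 and p ≥ 0 be integers. For each n, let (u_{n,1},...,u_{n,m}) be uniformly distributed on the set of tuples of nonnegative integers summing to n - p. Then (u_{n,1}/n, ..., u_{n,m}/n) converges in distribution as n → ∞ to the Dirichlet distribution with parameter (1,...,1) on the simplex. -/
open MeasureTheory Finset Filter

/-- The Dirichlet distribution with parameter `α : Fin m → ℝ`, defined as the pushforward,
under `y ↦ (y₁,...,y_{m-1}, 1 - Σ yᵢ)`, of the measure on `ℝ^{m-1}` with density
`(Γ(Σα)/∏Γ(αᵢ)) ∏ yᵢ^{αᵢ-1} (1-Σy)^{α_m-1}` on the open simplex. -/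
noncomputable def dirichletMeasure : {m : ℕ} → (Fin m → ℝ) → Measure (Fin m → ℝ)
  | 0, _ => 0
  | (n + 1), α =>
    Measure.map (fun y : Fin n → ℝ => Fin.snoc y (1 - ∑ i, y i))
      (((volume : Measure (Fin n → ℝ))).withDensity
        (fun y => ENNReal.ofReal
          (if (∀ i, 0 < y i) ∧ ∑ i, y i < 1 then
            (Real.Gamma (∑ i, α i) / ∏ i, Real.Gamma (α i)) *
              (∏ i : Fin n, y i ^ (α i.castSucc - 1)) *
              (1 - ∑ i, y i) ^ (α (Fin.last n) - 1)
          else 0)))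

open scoped Classical

/-- The set of compositions of `s` into `m` nonnegative parts, as a finite set of
functions `Fin m → ℕ`. -/
noncomputable def compositions (m s : ℕ) : Finset (Fin m → ℕ) :=
  (Fintype.piFinset (fun _ : Fin m => Finset.range (s + 1))).filter
    (fun u => ∑ i, u i = s)

/-- The uniform probability measure on compositions of `n - p` into `m` parts, rescaled
by `1/n`, viewed as a measure on `Fin m → ℝ`. -/
noncomputable def uniformCompMeasure (m p n : ℕ) : Measure (Fin m → ℝ) :=
  ((compositions m (n - p)).card : ENNReal)⁻¹ •
    ∑ u ∈ compositions m (n - p), Measure.dirac (fun i => (u i : ℝ) / n)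

/-!
Write `m = k + 1`. A composition `u` of `s` into `k + 1` parts is determined by its first `k`
parts, and `u / n = (y, s/n - ∑ y)` where `y` is a point of the lattice `(1/n) ℕᵏ`. Spreading
`g (u / n)` over the half-open cube of side `1/n` with corner `y` makes `n⁻ᵏ ∑ᵤ g (u / n)` the
integral of a step function. When `s/n → 1`, these step functions converge to `g (y, 1 - ∑ y)`
on the open simplex `Δ = {y > 0, ∑ y < 1}` and to `0` off its closure, so almost everywhere, and
dominated convergence gives `n⁻ᵏ ∑ᵤ g (u / n) → ∫_Δ g (y, 1 - ∑ y) dy`. Finally there are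
`C(s + k, k) ~ nᵏ / k!` compositions, and the Dirichlet law with parameter `(1, …, 1)` is `k!`
times the image of Lebesgue measure on `Δ` under `y ↦ (y, 1 - ∑ y)`.
-/

open Topology Asymptotics
open scoped Nat ENNReal

def openSimplex (k : ℕ) : Set (Fin k → ℝ) := {y | (∀ i, 0 < y i) ∧ ∑ i, y i < 1}

def extendToSum {k : ℕ} (t : ℝ) (y : Fin k → ℝ) : Fin (k + 1) → ℝ :=
  Fin.snoc y (t - ∑ i, y i)

theorem continuous_extendToSum {k : ℕ} (t : ℝ) : Continuous (extendToSum (k := k) t) := by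
  unfold extendToSum
  fun_prop

theorem measurableSet_openSimplex (k : ℕ) : MeasurableSet (openSimplex k) := by
  simp only [openSimplex, Set.ofPred_and, Set.ofPred_forall]
  exact (MeasurableSet.iInter fun i =>
      measurableSet_lt measurable_const (measurable_pi_apply i)).inter
    (measurableSet_lt (Finset.measurable_sum _ fun i _ => measurable_pi_apply i) measurable_const)

section Compositions

variable {k s : ℕ} {u : Fin (k + 1) → ℕ}

theorem mem_compositions {m : ℕ} {u : Fin m → ℕ} :
    u ∈ compositions m s ↔ ∑ i, u i = s := by
  refine mem_filter.trans ⟨And.right, fun h => ⟨Fintype.mem_piFinset.2 fun i => ?_, h⟩⟩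
  exact mem_range.2 <|
    Nat.lt_succ_of_le (h ▸ single_le_sum (fun _ _ => Nat.zero_le _) (mem_univ i))

theorem card_compositions_succ (k s : ℕ) : #(compositions (k + 1) s) = (s + k).choose k := by
  calc #(compositions (k + 1) s)
      = Fintype.card (compositions (k + 1) s) := (Fintype.card_coe _).symm
    _ = Fintype.card (Sym (Fin (k + 1)) s) :=
        Fintype.card_congr ((Equiv.subtypeEquivRight fun _ => mem_compositions).trans
          (Sym.equivNatSumOfFintype _ _).symm)
    _ = (s + k).choose k := by
        rw [Sym.card_sym_eq_choose, Fintype.card_fin, add_right_comm, Nat.add_sub_cancel,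
          add_comm k, Nat.choose_symm_add]

theorem sum_init_add_last (u : Fin (k + 1) → ℕ) :
    ∑ i, Fin.init u i + u (Fin.last k) = ∑ i, u i :=
  (Fin.sum_univ_castSucc u).symm

theorem sum_init_le_of_mem_compositions (hu : u ∈ compositions (k + 1) s) :
    ∑ i, Fin.init u i ≤ s := by
  rw [← mem_compositions.1 hu, ← sum_init_add_last]
  exact Nat.le_add_right _ _

theorem snoc_init_eq_of_mem_compositions (hu : u ∈ compositions (k + 1) s) :
    Fin.snoc (Fin.init u) (s - ∑ i, Fin.init u i) = u := by
  have h := sum_init_add_last u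
  rw [mem_compositions.1 hu] at h
  conv_rhs => rw [← Fin.snoc_init_self u]
  congr 1
  omega

theorem snoc_mem_compositions {v : Fin k → ℕ} (hv : ∑ i, v i ≤ s) :
    Fin.snoc v (s - ∑ i, v i) ∈ compositions (k + 1) s := by
  rw [mem_compositions, ← sum_init_add_last, Fin.init_snoc, Fin.snoc_last]
  omega

theorem init_injOn_compositions :
    Set.InjOn Fin.init (compositions (k + 1) s : Set (Fin (k + 1) → ℕ)) :=
  fun u hu u' hu' h => by
    rw [← snoc_init_eq_of_mem_compositions hu, ← snoc_init_eq_of_mem_compositions hu', h]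

theorem div_eq_extendToSum_of_mem_compositions (hu : u ∈ compositions (k + 1) s) (n : ℕ) :
    (fun i => (u i : ℝ) / n) = extendToSum ((s : ℝ) / n) fun i => (Fin.init u i : ℝ) / n := by
  conv_lhs => rw [← snoc_init_eq_of_mem_compositions hu]
  ext j
  induction j using Fin.lastCases with
  | last =>
    simp only [extendToSum, Fin.snoc_last, ← Finset.sum_div, sub_div,
      Nat.cast_sub (sum_init_le_of_mem_compositions hu), Nat.cast_sum]
  | cast i => simp only [extendToSum, Fin.snoc_castSucc]

end Compositions

section Counting

variable {s : ℕ → ℕ}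

theorem tendsto_add_const_div (hs : Tendsto (fun n => (s n : ℝ) / n) atTop (𝓝 1))
    (c : ℝ) : Tendsto (fun n => ((s n : ℝ) + c) / n) atTop (𝓝 1) := by
  simpa [add_div] using hs.add (tendsto_const_div_atTop_nhds_zero_nat c)

theorem isEquivalent_card_compositions (hs : Tendsto (fun n => (s n : ℝ) / n) atTop (𝓝 1))
    (k : ℕ) :
    (fun n => (#(compositions (k + 1) (s n)) : ℝ)) ~[atTop] fun n => (n : ℝ) ^ k / k ! := by
  have hlin : (fun n => ((s n + k : ℕ) : ℝ)) ~[atTop] fun n => (n : ℝ) :=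
    isEquivalent_of_tendsto_one (by simpa [Pi.div_def] using tendsto_add_const_div hs k)
  have htop : Tendsto (fun n => s n + k) atTop atTop :=
    tendsto_natCast_atTop_iff.1 (hlin.symm.tendsto_atTop tendsto_natCast_atTop_atTop)
  simp_rw [card_compositions_succ]
  exact ((isEquivalent_choose k).comp_tendsto htop).trans ((hlin.pow k).div IsEquivalent.refl)

theorem tendsto_pow_div_card_compositions (hs : Tendsto (fun n => (s n : ℝ) / n) atTop (𝓝 1))
    (k : ℕ) :
    Tendsto (fun n : ℕ => (n : ℝ) ^ k / #(compositions (k + 1) (s n))) atTop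
      (𝓝 (k ! : ℝ)) := by
  refine (IsEquivalent.refl.div (isEquivalent_card_compositions hs k)).symm.tendsto_nhds ?_
  refine tendsto_const_nhds.congr' ?_
  filter_upwards [eventually_gt_atTop 0] with n hn
  exact (div_div_cancel₀ (by positivity)).symm

theorem tendsto_natSub_div_self (p : ℕ) :
    Tendsto (fun n : ℕ => ((n - p : ℕ) : ℝ) / n) atTop (𝓝 1) := by
  have h := (tendsto_const_nhds (x := (1 : ℝ))).sub
    (tendsto_const_div_atTop_nhds_zero_nat (p : ℝ))
  rw [sub_zero] at h
  refine h.congr' ?_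
  filter_upwards [eventually_gt_atTop p] with n hn
  rw [Nat.cast_sub hn.le, sub_div, div_self (Nat.cast_pos.2 (p.zero_le.trans_lt hn)).ne']

end Counting

def gridCube {k : ℕ} (n : ℕ) (v : Fin k → ℕ) : Set (Fin k → ℝ) :=
  Set.univ.pi fun i => Set.Ico ((v i : ℝ) / n) ((v i + 1) / n)

section GridCube

variable {k n : ℕ} {v : Fin k → ℕ} {x : Fin k → ℝ}

theorem measurableSet_gridCube : MeasurableSet (gridCube n v) :=
  MeasurableSet.univ_pi fun _ => measurableSet_Ico

theorem volume_gridCube : volume (gridCube n v) = ENNReal.ofReal ((n : ℝ)⁻¹) ^ k := by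
  simp [gridCube, volume_pi_pi, Real.volume_Ico, add_div]

theorem volume_real_gridCube : volume.real (gridCube n v) = ((n : ℝ) ^ k)⁻¹ := by
  rw [measureReal_def, volume_gridCube, ENNReal.toReal_pow,
    ENNReal.toReal_ofReal (by positivity), inv_pow]

theorem mem_gridCube_iff (hn : 0 < n) :
    x ∈ gridCube n v ↔ ∀ i, 0 ≤ x i ∧ ⌊x i * n⌋₊ = v i := by
  have hn' : (0 : ℝ) < n := Nat.cast_pos.2 hn
  simp only [gridCube, Set.mem_univ_pi, Set.mem_Ico, div_le_iff₀ hn', lt_div_iff₀ hn']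
  refine forall_congr' fun i => ⟨fun ⟨hlo, hhi⟩ => ?_, fun ⟨hx, hfl⟩ => ?_⟩
  · have hx : 0 ≤ x i := nonneg_of_mul_nonneg_left ((Nat.cast_nonneg _).trans hlo) hn'
    exact ⟨hx, (Nat.floor_eq_iff (by positivity)).2 ⟨hlo, hhi⟩⟩
  · exact (Nat.floor_eq_iff (by positivity)).1 hfl

theorem sum_le_of_mem_gridCube (hn : 0 < n) (hx : x ∈ gridCube n v) :
    ∑ i, x i ≤ ((∑ i, v i : ℕ) + k) / n := by
  have hn' : (0 : ℝ) < n := Nat.cast_pos.2 hn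
  calc ∑ i, x i ≤ ∑ i, ((v i : ℝ) + 1) / n :=
        sum_le_sum fun i _ => (Set.mem_univ_pi.1 hx i).2.le
    _ = ((∑ i, v i : ℕ) + k) / n := by simp [← Finset.sum_div, sum_add_distrib]

theorem integral_sum_indicator_gridCube {ι : Type*} (t : Finset ι) (v : ι → Fin k → ℕ)
    (c : ι → ℝ) :
    ∫ x, ∑ i ∈ t, (gridCube n (v i)).indicator (fun _ => c i) x =
      ((n : ℝ) ^ k)⁻¹ * ∑ i ∈ t, c i := by
  have hfin : ∀ i, volume (gridCube n (v i)) ≠ ⊤ := fun i => by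
    rw [volume_gridCube]; exact ENNReal.pow_ne_top ENNReal.ofReal_ne_top
  rw [integral_finsetSum _ fun i _ =>
      (integrable_indicator_iff measurableSet_gridCube).2 (integrableOn_const (hfin i)), mul_sum]
  refine sum_congr rfl fun i _ => ?_
  rw [integral_indicator_const _ measurableSet_gridCube, volume_real_gridCube, smul_eq_mul]

end GridCube

noncomputable def riemannStep (k s n : ℕ) (g : (Fin (k + 1) → ℝ) → ℝ) (x : Fin k → ℝ) :
    ℝ :=
  ∑ u ∈ compositions (k + 1) s,
    (gridCube n (Fin.init u)).indicator (fun _ => g fun i => (u i : ℝ) / n) x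

section RiemannStep

variable {k s n : ℕ} {g : (Fin (k + 1) → ℝ) → ℝ} {x : Fin k → ℝ}

theorem integral_riemannStep :
    ∫ x, riemannStep k s n g x =
      ((n : ℝ) ^ k)⁻¹ * ∑ u ∈ compositions (k + 1) s, g fun i => (u i : ℝ) / n :=
  integral_sum_indicator_gridCube _ _ _

theorem measurable_riemannStep : Measurable (riemannStep k s n g) :=
  Finset.measurable_sum _ fun _ _ => measurable_const.indicator measurableSet_gridCube

theorem riemannStep_eq_of_mem_gridCube (hn : 0 < n) {u : Fin (k + 1) → ℕ}
    (hu : u ∈ compositions (k + 1) s) (hx : x ∈ gridCube n (Fin.init u)) :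
    riemannStep k s n g x = g fun i => (u i : ℝ) / n := by
  refine (sum_eq_single_of_mem u hu fun u' hu' hne => ?_).trans (Set.indicator_of_mem hx _)
  refine Set.indicator_of_notMem (fun hx' => hne (init_injOn_compositions hu' hu ?_)) _
  ext i
  rw [mem_gridCube_iff hn] at hx hx'
  rw [← (hx' i).2, (hx i).2]

theorem riemannStep_eq_zero
    (hx : ∀ u ∈ compositions (k + 1) s, x ∉ gridCube n (Fin.init u)) :
    riemannStep k s n g x = 0 :=
  sum_eq_zero fun u hu => Set.indicator_of_notMem (hx u hu) _

theorem nonneg_and_sum_le_of_riemannStep_ne_zero (hn : 0 < n)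
    (h : riemannStep k s n g x ≠ 0) :
    (∀ i, 0 ≤ x i) ∧ ∑ i, x i ≤ ((s : ℝ) + k) / n := by
  obtain ⟨u, hu, hx⟩ : ∃ u ∈ compositions (k + 1) s, x ∈ gridCube n (Fin.init u) := by
    by_contra! h'
    exact h (riemannStep_eq_zero h')
  refine ⟨fun i => ((mem_gridCube_iff hn).1 hx i).1, (sum_le_of_mem_gridCube hn hx).trans ?_⟩
  gcongr
  exact_mod_cast sum_init_le_of_mem_compositions hu

theorem abs_riemannStep_le (hn : 0 < n) (g : BoundedContinuousFunction (Fin (k + 1) → ℝ) ℝ) :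
    |riemannStep k s n g x| ≤ ‖g‖ := by
  by_cases hx : ∃ u ∈ compositions (k + 1) s, x ∈ gridCube n (Fin.init u)
  · obtain ⟨u, hu, hx⟩ := hx
    rw [riemannStep_eq_of_mem_gridCube hn hu hx]
    exact g.norm_coe_le_norm _
  · push Not at hx
    rw [riemannStep_eq_zero hx, abs_zero]
    exact norm_nonneg g

end RiemannStep

theorem volume_setOf_sum_eq (k : ℕ) {c : ℝ} (hc : c ≠ 0) :
    volume {x : Fin k → ℝ | ∑ i, x i = c} = 0 := by
  let sumMap : (Fin k → ℝ) →ₗ[ℝ] ℝ := ∑ i, LinearMap.proj i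
  let H : AffineSubspace ℝ (Fin k → ℝ) :=
    (AffineSubspace.mk' c ⊥).comap sumMap.toAffineMap
  have hH : {x : Fin k → ℝ | ∑ i, x i = c} = H := by
    ext x
    simp [H, sumMap, AffineSubspace.mem_mk', sub_eq_zero]
  have hne : H ≠ ⊤ := fun h => by
    have h0 : (0 : Fin k → ℝ) ∈ H := h ▸ AffineSubspace.mem_top ℝ _ 0
    exact hc (by simpa [H, AffineSubspace.mem_mk'] using h0)
  rw [hH]
  exact Measure.addHaar_affineSubspace _ H hne

section Convergence

variable {k : ℕ} {s : ℕ → ℕ} {x : Fin k → ℝ}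

theorem tendsto_riemannStep_of_mem_openSimplex
    (hs : Tendsto (fun n => (s n : ℝ) / n) atTop (𝓝 1))
    (g : BoundedContinuousFunction (Fin (k + 1) → ℝ) ℝ) (hx : x ∈ openSimplex k) :
    Tendsto (fun n => riemannStep k (s n) n g x) atTop (𝓝 (g (extendToSum 1 x))) := by
  set w : ℕ → Fin k → ℕ := fun n i => ⌊x i * n⌋₊
  have hw : ∀ i, Tendsto (fun n => (w n i : ℝ) / n) atTop (𝓝 (x i)) := fun i =>
    (tendsto_nat_floor_mul_div_atTop (hx.1 i).le).comp tendsto_natCast_atTop_atTop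
  have hsum : ∀ᶠ n in atTop, ∑ i, w n i ≤ s n := by
    filter_upwards [hs.eventually (lt_mem_nhds hx.2), eventually_gt_atTop 0] with n hlt hn
    have hn' : (0 : ℝ) < n := Nat.cast_pos.2 hn
    rw [lt_div_iff₀ hn'] at hlt
    have : ((∑ i, w n i : ℕ) : ℝ) ≤ ∑ i, x i * n := by
      push_cast
      exact sum_le_sum fun i _ => Nat.floor_le (mul_nonneg (hx.1 i).le hn'.le)
    rw [← sum_mul] at this
    exact_mod_cast this.trans hlt.le
  have heq : ∀ᶠ n in atTop, riemannStep k (s n) n g x =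
      g (extendToSum ((s n : ℝ) / n) fun i => (w n i : ℝ) / n) := by
    filter_upwards [hsum, eventually_gt_atTop 0] with n hle hn
    have hu := snoc_mem_compositions hle
    have hx' : x ∈ gridCube n (w n) := (mem_gridCube_iff hn).2 fun i => ⟨(hx.1 i).le, rfl⟩
    rw [riemannStep_eq_of_mem_gridCube hn hu (by rwa [Fin.init_snoc]),
      div_eq_extendToSum_of_mem_compositions hu, Fin.init_snoc]
  refine Tendsto.congr' (EventuallyEq.symm heq) ((g.continuous.tendsto _).comp ?_)
  exact (tendsto_pi_nhds.2 hw).finSnoc (hs.sub (tendsto_finsetSum _ fun i _ => hw i))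

theorem eventually_riemannStep_eq_zero (hs : Tendsto (fun n => (s n : ℝ) / n) atTop (𝓝 1))
    (g : (Fin (k + 1) → ℝ) → ℝ) (hx : (∃ j, x j < 0) ∨ 1 < ∑ i, x i) :
    ∀ᶠ n in atTop, riemannStep k (s n) n g x = 0 := by
  rcases hx with ⟨j, hj⟩ | hgt
  · filter_upwards [eventually_gt_atTop 0] with n hn
    by_contra h
    exact hj.not_ge ((nonneg_and_sum_le_of_riemannStep_ne_zero hn h).1 j)
  · filter_upwards [(tendsto_add_const_div hs k).eventually (gt_mem_nhds hgt),
      eventually_gt_atTop 0] with n hlt hn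
    by_contra h
    exact hlt.not_ge (nonneg_and_sum_le_of_riemannStep_ne_zero hn h).2

theorem ae_tendsto_riemannStep (hs : Tendsto (fun n => (s n : ℝ) / n) atTop (𝓝 1))
    (g : BoundedContinuousFunction (Fin (k + 1) → ℝ) ℝ) :
    ∀ᵐ x, Tendsto (fun n => riemannStep k (s n) n g x) atTop
      (𝓝 ((openSimplex k).indicator (fun y => g (extendToSum 1 y)) x)) := by
  have hgood : ∀ᵐ x : Fin k → ℝ, (∀ i, x i ≠ 0) ∧ ∑ i, x i ≠ 1 := by
    refine (ae_all_iff.2 fun i => ?_).and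
      (compl_mem_ae_iff.2 (volume_setOf_sum_eq k one_ne_zero))
    rw [volume_pi]
    exact Measure.ae_eval_ne _ i 0
  filter_upwards [hgood] with x ⟨hx0, hx1⟩
  -- off these hyperplanes, `x` lies either in the open simplex or outside its closure
  by_cases hx : x ∈ openSimplex k
  · rw [Set.indicator_of_mem hx]
    exact tendsto_riemannStep_of_mem_openSimplex hs g hx
  · rw [Set.indicator_of_notMem hx]
    refine tendsto_const_nhds.congr' (EventuallyEq.symm (eventually_riemannStep_eq_zero hs g ?_))
    simp only [openSimplex, Set.mem_ofPred_eq, not_and_or, not_forall, not_lt] at hx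
    exact hx.imp (fun ⟨j, hj⟩ => ⟨j, hj.lt_of_ne (hx0 j)⟩) fun h => h.lt_of_ne' hx1

end Convergence

theorem norm_riemannStep_le_indicator {k s n : ℕ} (hn : 0 < n) (hs : s ≤ n)
    (g : BoundedContinuousFunction (Fin (k + 1) → ℝ) ℝ) (x : Fin k → ℝ) :
    ‖riemannStep k s n g x‖ ≤
      (Set.univ.pi fun _ => Set.Icc (0 : ℝ) (1 + k)).indicator (fun _ => ‖g‖) x := by
  by_cases h : riemannStep k s n g x = 0
  · rw [h, norm_zero]
    exact Set.indicator_nonneg (fun _ _ => norm_nonneg g) x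
  obtain ⟨hx, hsum⟩ := nonneg_and_sum_le_of_riemannStep_ne_zero hn h
  have hbound : ((s : ℝ) + k) / n ≤ 1 + k := by
    have hn' : (1 : ℝ) ≤ n := Nat.one_le_cast.2 hn
    rw [div_le_iff₀ (by positivity)]
    nlinarith [(Nat.cast_le (α := ℝ)).2 hs, (Nat.cast_nonneg k : (0 : ℝ) ≤ k)]
  have hmem : x ∈ Set.univ.pi fun _ => Set.Icc (0 : ℝ) (1 + k) := fun i _ =>
    ⟨hx i, (single_le_sum (fun j _ => hx j) (mem_univ i)).trans (hsum.trans hbound)⟩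
  rw [Set.indicator_of_mem hmem, Real.norm_eq_abs]
  exact abs_riemannStep_le hn g

theorem tendsto_riemannSum_compositions {k : ℕ} {s : ℕ → ℕ} (hs_le : ∀ n, s n ≤ n)
    (hs : Tendsto (fun n => (s n : ℝ) / n) atTop (𝓝 1))
    (g : BoundedContinuousFunction (Fin (k + 1) → ℝ) ℝ) :
    Tendsto (fun n : ℕ =>
        ((n : ℝ) ^ k)⁻¹ * ∑ u ∈ compositions (k + 1) (s n), g fun i => (u i : ℝ) / n)
      atTop (𝓝 (∫ y in openSimplex k, g (extendToSum 1 y))) := by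
  simp_rw [← integral_riemannStep, ← integral_indicator (measurableSet_openSimplex k)]
  have hbox : volume (Set.univ.pi fun _ : Fin k => Set.Icc (0 : ℝ) (1 + k)) ≠ ⊤ :=
    (isCompact_univ_pi fun _ => isCompact_Icc).measure_lt_top.ne
  refine tendsto_integral_filter_of_dominated_convergence _
    (Eventually.of_forall fun n => measurable_riemannStep.aestronglyMeasurable) ?_
    ((integrable_indicator_iff (MeasurableSet.univ_pi fun _ => measurableSet_Icc)).2
      (integrableOn_const (C := ‖g‖) hbox)) (ae_tendsto_riemannStep hs g)
  filter_upwards [eventually_gt_atTop 0] with n hn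
  exact Eventually.of_forall (norm_riemannStep_le_indicator hn (hs_le n) g)

theorem dirichletMeasure_one (k : ℕ) :
    dirichletMeasure (fun _ : Fin (k + 1) => (1 : ℝ)) =
      (k ! : ℝ≥0∞) • (volume.restrict (openSimplex k)).map (extendToSum 1) := by
  have hdensity : (fun y : Fin k → ℝ => ENNReal.ofReal
      (if (∀ i, 0 < y i) ∧ ∑ i, y i < 1 then
        (Real.Gamma (∑ _i : Fin (k + 1), (1 : ℝ)) / ∏ _i : Fin (k + 1), Real.Gamma 1) *
          (∏ i : Fin k, y i ^ ((1 : ℝ) - 1)) * (1 - ∑ i, y i) ^ ((1 : ℝ) - 1)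
      else 0)) = (openSimplex k).indicator fun _ => (k ! : ℝ≥0∞) := by
    ext y
    simp only [Set.indicator, openSimplex, Set.mem_ofPred_eq]
    split_ifs with hy
    · simp [hy, Real.Gamma_nat_eq_factorial]
    · simp [hy]
  rw [dirichletMeasure, hdensity, withDensity_indicator (measurableSet_openSimplex k),
    withDensity_const, Measure.map_smul]
  rfl

theorem integral_dirichletMeasure_one {k : ℕ}
    (g : BoundedContinuousFunction (Fin (k + 1) → ℝ) ℝ) :
    ∫ x, g x ∂dirichletMeasure (fun _ : Fin (k + 1) => (1 : ℝ)) =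
      k ! * ∫ y in openSimplex k, g (extendToSum 1 y) := by
  rw [dirichletMeasure_one, integral_smul_measure,
    integral_map (continuous_extendToSum 1).aemeasurable g.continuous.aestronglyMeasurable]
  simp

theorem integral_uniformCompMeasure (m p n : ℕ) (g : (Fin m → ℝ) → ℝ) :
    ∫ x, g x ∂uniformCompMeasure m p n =
      (#(compositions m (n - p)) : ℝ)⁻¹ *
        ∑ u ∈ compositions m (n - p), g fun i => (u i : ℝ) / n := by
  rw [uniformCompMeasure, integral_smul_measure,
    integral_finsetSum_measure fun u _ => integrable_dirac enorm_lt_top]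
  simp [integral_dirac]

/-- Let `m ≥ 2` and `p ≥ 0`. If `(u_{n,1},...,u_{n,m})` is uniform on the tuples of
nonnegative integers summing to `n - p`, then `(u_{n,1}/n,...,u_{n,m}/n)` converges in
distribution, as `n → ∞`, to the Dirichlet distribution with parameter `(1,...,1)`. -/
theorem stmt_6 (m p : ℕ) (hm : 2 ≤ m) :
    ∀ g : BoundedContinuousFunction (Fin m → ℝ) ℝ,
      Tendsto (fun n : ℕ => ∫ x, g x ∂(uniformCompMeasure m p n)) atTop
        (nhds (∫ x, g x ∂(dirichletMeasure (fun _ : Fin m => (1 : ℝ))))) := by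
  obtain ⟨k, rfl⟩ : ∃ k, m = k + 1 := ⟨m - 1, by omega⟩
  intro g
  have hs := tendsto_natSub_div_self p
  have hlim := (tendsto_riemannSum_compositions (fun n => n.sub_le p) hs g).mul
    (tendsto_pow_div_card_compositions hs k)
  rw [integral_dirichletMeasure_one, mul_comm]
  refine hlim.congr' ?_
  filter_upwards [eventually_gt_atTop 0] with n hn
  rw [integral_uniformCompMeasure]
  have : (n : ℝ) ^ k ≠ 0 := by positivity
  field_simp
end

section
/- Let g: (0,ε) → (0,∞) be infinitely differentiable with monotone derivatives near 0, and suppose x·g'(x)/g(x) → α ∈ (1,2) as x → 0⁺, with g(x) = x^α ℓ(1/x) where ℓ is slowly varying. Then for every positive integer p, x^p · g^{(p)}(x)/g(x) → Γ(α+1)/Γ(α+1-p) as x → 0⁺. -/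
open Filter Set Topology

/-- A positive function on `(0,∞)` is slowly varying if `ℓ(ax)/ℓ(x) → 1` as `x → ∞` for
every `a > 0`. -/
def SlowlyVarying (ℓ : ℝ → ℝ) : Prop :=
  (∀ x > 0, 0 < ℓ x) ∧ ∀ a > 0, Tendsto (fun x => ℓ (a * x) / ℓ x) atTop (nhds 1)

/-- `α ∈ (1,2)` is not an integer. -/
lemma sv_not_int {α : ℝ} (hα1 : 1 < α) (hα2 : α < 2) (k : ℤ) : α ≠ (k : ℝ) := by
  intro h
  have h1 : (1 : ℝ) < (k : ℝ) := h ▸ hα1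
  have h2 : (k : ℝ) < 2 := h ▸ hα2
  have h1' : (1 : ℤ) < k := by exact_mod_cast h1
  have h2' : k < 2 := by exact_mod_cast h2
  omega

lemma sv_gamma_ne_zero {α : ℝ} (hα1 : 1 < α) (hα2 : α < 2) (z : ℤ) :
    Real.Gamma (α + z) ≠ 0 := by
  refine Real.Gamma_ne_zero (fun m hm => ?_)
  apply sv_not_int hα1 hα2 (-m - z)
  push_cast
  linarith

/-- The scaling limit of `x ↦ l * x` at `0⁺`. -/
lemma sv_tendsto_mul {l : ℝ} (hl : 0 < l) :
    Tendsto (fun x : ℝ => l * x) (𝓝[>] 0) (𝓝[>] 0) := by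
  rw [tendsto_nhdsWithin_iff]
  constructor
  · have : Tendsto (fun x : ℝ => l * x) (𝓝 0) (𝓝 (l * 0)) := (tendsto_id).const_mul l
    simpa using this.mono_left nhdsWithin_le_nhds
  · exact eventually_mem_nhdsWithin.mono (fun x hx => mul_pos hl hx)

/-- Key sandwich / monotone density step. -/
lemma sv_step (ε : ℝ) (hε : 0 < ε) (α c : ℝ) (g f f' : ℝ → ℝ) (p : ℕ)
    (hgpos : ∀ x ∈ Ioo (0:ℝ) ε, 0 < g x)
    (hratio : ∀ l : ℝ, 0 < l → Tendsto (fun x => g (l * x) / g x) (𝓝[>] 0) (𝓝 (l ^ α)))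
    (hf' : ∀ x ∈ Ioo (0:ℝ) ε, HasDerivAt f (f' x) x)
    (hm : MonotoneOn f' (Ioo (0:ℝ) ε) ∨ AntitoneOn f' (Ioo (0:ℝ) ε))
    (hp : Tendsto (fun x => x ^ p * f x / g x) (𝓝[>] 0) (𝓝 c)) :
    Tendsto (fun x => x ^ (p + 1) * f' x / g x) (𝓝[>] 0) (𝓝 (c * (α - p))) := by
  set β : ℝ := α - p with hβ
  -- limit of x^p f(l x)/g x
  have hφ : ∀ l : ℝ, 0 < l →
      Tendsto (fun x => x ^ p * f (l * x) / g x) (𝓝[>] 0) (𝓝 (c * l ^ β)) := by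
    intro l hl
    have h1 : Tendsto (fun x => (l * x) ^ p * f (l * x) / g (l * x)) (𝓝[>] 0) (𝓝 c) :=
      hp.comp (sv_tendsto_mul hl)
    have h2 := hratio l hl
    have h3 : Tendsto (fun x =>
        ((l * x) ^ p * f (l * x) / g (l * x)) * (g (l * x) / g x) / l ^ p)
        (𝓝[>] 0) (𝓝 (c * l ^ α / l ^ p)) := (h1.mul h2).div_const _
    have hmem : Ioo (0:ℝ) (min ε (ε / l)) ∈ 𝓝[>] (0:ℝ) :=
      Ioo_mem_nhdsGT_of_mem ⟨le_refl _, lt_min hε (div_pos hε hl)⟩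
    have heq : ∀ᶠ x in 𝓝[>] (0:ℝ),
        ((l * x) ^ p * f (l * x) / g (l * x)) * (g (l * x) / g x) / l ^ p
          = x ^ p * f (l * x) / g x := by
      filter_upwards [hmem] with x hx
      have hx0 : 0 < x := hx.1
      have hxe : x < ε := lt_of_lt_of_le hx.2 (min_le_left _ _)
      have hlx : l * x ∈ Ioo (0:ℝ) ε := by
        constructor
        · exact mul_pos hl hx0
        · have : x < ε / l := lt_of_lt_of_le hx.2 (min_le_right _ _)
          calc l * x < l * (ε / l) := by exact mul_lt_mul_of_pos_left this hl
          _ = ε := by field_simp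
      have hglx : g (l * x) ≠ 0 := ne_of_gt (hgpos _ hlx)
      have hgx : g x ≠ 0 := ne_of_gt (hgpos x ⟨hx0, hxe⟩)
      have hlp : (l : ℝ) ^ p ≠ 0 := pow_ne_zero _ (ne_of_gt hl)
      field_simp
      ring
    have hval : c * l ^ α / l ^ p = c * l ^ β := by
      rw [hβ, Real.rpow_sub hl, Real.rpow_natCast]
      ring
    rw [← hval]
    exact Tendsto.congr' heq h3
  -- limits of the two difference-quotient families in λ, as λ → 1⁺
  set L : ℝ := c * β with hL
  have hAbar : Tendsto (fun l : ℝ => (c * l ^ β - c) / (l - 1)) (𝓝[>] 1) (𝓝 L) := by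
    have hder : HasDerivAt (fun t : ℝ => c * t ^ β) (c * β) 1 := by
      have := (Real.hasDerivAt_rpow_const (x := (1:ℝ)) (p := β) (Or.inl one_ne_zero)).const_mul c
      simpa using this
    have := hasDerivAt_iff_tendsto_slope.1 hder
    have h2 : Tendsto (slope (fun t : ℝ => c * t ^ β) 1) (𝓝[>] 1) (𝓝 (c * β)) :=
      this.mono_left (nhdsWithin_mono 1 (fun x hx => ne_of_gt hx))
    refine Tendsto.congr' ?_ h2
    filter_upwards [eventually_mem_nhdsWithin] with l (hl : 1 < l)
    rw [slope_def_field]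
    simp [Real.one_rpow]
  have hBbar : Tendsto (fun l : ℝ => (c - c * l ^ (-β)) / (1 - 1 / l)) (𝓝[>] 1) (𝓝 L) := by
    have hder : HasDerivAt (fun t : ℝ => c * t ^ (-β)) (c * (-β)) 1 := by
      have := (Real.hasDerivAt_rpow_const (x := (1:ℝ)) (p := -β) (Or.inl one_ne_zero)).const_mul c
      simpa using this
    have h2 : Tendsto (slope (fun t : ℝ => c * t ^ (-β)) 1) (𝓝[>] 1) (𝓝 (c * (-β))) :=
      (hasDerivAt_iff_tendsto_slope.1 hder).mono_left
        (nhdsWithin_mono 1 (fun x hx => ne_of_gt hx))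
    have hneg : Tendsto (fun l : ℝ => -l) (𝓝[>] 1) (𝓝 (-1)) :=
      (tendsto_id.neg).mono_left nhdsWithin_le_nhds
    have h3 : Tendsto (fun l : ℝ => -l * slope (fun t : ℝ => c * t ^ (-β)) 1 l)
        (𝓝[>] 1) (𝓝 (-1 * (c * -β))) := hneg.mul h2
    have hval : (-1 : ℝ) * (c * -β) = L := by rw [hL]; ring
    rw [← hval]
    refine Tendsto.congr' ?_ h3
    filter_upwards [eventually_mem_nhdsWithin] with l (hl : 1 < l)
    have hl0 : (0:ℝ) < l := lt_trans one_pos hl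
    have hl1 : l - 1 ≠ 0 := ne_of_gt (by linarith)
    rw [slope_def_field]
    rw [Real.one_rpow]
    field_simp
    ring
  -- final ε-δ argument
  rw [Metric.tendsto_nhds]
  intro δ hδ
  have hδ2 : 0 < δ / 2 := by linarith
  have hball : ∀ᶠ l in 𝓝[>] (1:ℝ),
      |(c * l ^ β - c) / (l - 1) - L| < δ / 2 ∧
      |(c - c * l ^ (-β)) / (1 - 1 / l) - L| < δ / 2 ∧ 1 < l := by
    have e1 := hAbar.eventually (eventually_abs_sub_lt L hδ2)
    have e2 := hBbar.eventually (eventually_abs_sub_lt L hδ2)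
    filter_upwards [e1, e2, eventually_mem_nhdsWithin] with l h1 h2 h3
    exact ⟨h1, h2, h3⟩
  obtain ⟨l, hA, hB, hl⟩ := hball.exists
  have hl0 : (0:ℝ) < l := lt_trans one_pos hl
  have hl1 : (0:ℝ) < l - 1 := by linarith
  have hil : (0:ℝ) < 1 - 1 / l := by
    have : 1 / l < 1 := by rw [div_lt_one hl0]; exact hl
    linarith
  -- the two x-families
  have hAx : Tendsto (fun x => (x ^ p * f (l * x) / g x - x ^ p * f x / g x) / (l - 1))
      (𝓝[>] 0) (𝓝 ((c * l ^ β - c) / (l - 1))) := ((hφ l hl0).sub hp).div_const _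
  have hBx : Tendsto (fun x => (x ^ p * f x / g x - x ^ p * f (l⁻¹ * x) / g x) / (1 - 1 / l))
      (𝓝[>] 0) (𝓝 ((c - c * l ^ (-β)) / (1 - 1 / l))) := by
    have h1 := hφ l⁻¹ (inv_pos.2 hl0)
    have hval : c * (l⁻¹) ^ β = c * l ^ (-β) := by
      rw [Real.inv_rpow (le_of_lt hl0), ← Real.rpow_neg (le_of_lt hl0)]
    rw [hval] at h1
    exact (hp.sub h1).div_const _
  have eA := hAx.eventually (eventually_abs_sub_lt _ hδ2)
  have eB := hBx.eventually (eventually_abs_sub_lt _ hδ2)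
  have hmem : Ioo (0:ℝ) (ε / l) ∈ 𝓝[>] (0:ℝ) :=
    Ioo_mem_nhdsGT_of_mem ⟨le_refl _, div_pos hε hl0⟩
  filter_upwards [eA, eB, hmem] with x hxA hxB hx
  -- set up points
  have hx0 : 0 < x := hx.1
  have hxl : x < ε / l := hx.2
  have hxe : x < ε := lt_trans hxl (by rw [div_lt_iff₀ hl0]; nlinarith)
  have hxIoo : x ∈ Ioo (0:ℝ) ε := ⟨hx0, hxe⟩
  have hyIoo : l * x ∈ Ioo (0:ℝ) ε := by
    refine ⟨mul_pos hl0 hx0, ?_⟩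
    calc l * x < l * (ε / l) := mul_lt_mul_of_pos_left hxl hl0
    _ = ε := by field_simp
  have hzIoo : l⁻¹ * x ∈ Ioo (0:ℝ) ε := by
    refine ⟨mul_pos (inv_pos.2 hl0) hx0, ?_⟩
    have : l⁻¹ * x < 1 * x := by
      apply mul_lt_mul_of_pos_right _ hx0
      rw [inv_lt_one_iff₀]; right; exact hl
    linarith [this, hxe]
  have hxy : x < l * x := by nlinarith
  have hzx : l⁻¹ * x < x := by
    have : l⁻¹ * x < 1 * x := by
      apply mul_lt_mul_of_pos_right _ hx0
      rw [inv_lt_one_iff₀]; right; exact hl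
    linarith
  have hgx : (0:ℝ) < g x := hgpos x hxIoo
  -- MVT on [x, l x]
  have hsub1 : Icc x (l * x) ⊆ Ioo (0:ℝ) ε := fun t ht =>
    ⟨lt_of_lt_of_le hx0 ht.1, lt_of_le_of_lt ht.2 hyIoo.2⟩
  have hsub2 : Icc (l⁻¹ * x) x ⊆ Ioo (0:ℝ) ε := fun t ht =>
    ⟨lt_of_lt_of_le hzIoo.1 ht.1, lt_of_le_of_lt ht.2 hxe⟩
  have hc1 : ∃ t ∈ Ioo x (l * x), f' t = (f (l * x) - f x) / (l * x - x) := by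
    apply exists_hasDerivAt_eq_slope f f' hxy
    · exact fun t ht => ((hf' t (hsub1 ht)).continuousAt).continuousWithinAt
    · exact fun t ht => hf' t (hsub1 ⟨le_of_lt ht.1, le_of_lt ht.2⟩)
  have hc2 : ∃ t ∈ Ioo (l⁻¹ * x) x, f' t = (f x - f (l⁻¹ * x)) / (x - l⁻¹ * x) := by
    apply exists_hasDerivAt_eq_slope f f' hzx
    · exact fun t ht => ((hf' t (hsub2 ht)).continuousAt).continuousWithinAt
    · exact fun t ht => hf' t (hsub2 ⟨le_of_lt ht.1, le_of_lt ht.2⟩)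
  obtain ⟨t1, ht1, hs1⟩ := hc1
  obtain ⟨t2, ht2, hs2⟩ := hc2
  have ht1I : t1 ∈ Ioo (0:ℝ) ε := hsub1 ⟨le_of_lt ht1.1, le_of_lt ht1.2⟩
  have ht2I : t2 ∈ Ioo (0:ℝ) ε := hsub2 ⟨le_of_lt ht2.1, le_of_lt ht2.2⟩
  have hyx : (0:ℝ) < l * x - x := by linarith
  have hxz : (0:ℝ) < x - l⁻¹ * x := by linarith
  -- expressions
  set u : ℝ := x ^ (p + 1) * f' x / g x with hu
  set A : ℝ := (x ^ p * f (l * x) / g x - x ^ p * f x / g x) / (l - 1) with hA'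
  set B : ℝ := (x ^ p * f x / g x - x ^ p * f (l⁻¹ * x) / g x) / (1 - 1 / l) with hB'
  have hgxne : g x ≠ 0 := ne_of_gt hgx
  have hAeq : A = (x ^ p * (f (l * x) - f x)) / g x / (l - 1) := by rw [hA']; ring
  have hBeq : B = (x ^ p * (f x - f (l⁻¹ * x))) / g x / (1 - 1 / l) := by rw [hB']; ring
  have huA : u = (x ^ p * (f' x * (l * x - x))) / g x / (l - 1) := by
    rw [hu]
    field_simp
    ring
  have huB : u = (x ^ p * (f' x * (x - l⁻¹ * x))) / g x / (1 - 1 / l) := by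
    rw [hu]
    rw [div_eq_div_iff hgxne (by positivity)]
    field_simp
    ring
  have hxp : (0:ℝ) < x ^ p := pow_pos hx0 p
  -- sandwich
  have hsand : (u ≤ A ∧ B ≤ u) ∨ (A ≤ u ∧ u ≤ B) := by
    rcases hm with hmm | hmm
    · left
      constructor
      · rw [huA, hAeq]
        have h1 : f' x ≤ f' t1 := hmm hxIoo ht1I (le_of_lt ht1.1)
        have h2 : f' x * (l * x - x) ≤ f (l * x) - f x := by
          rw [hs1] at h1
          calc f' x * (l * x - x) ≤ (f (l * x) - f x) / (l * x - x) * (l * x - x) := by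
                exact mul_le_mul_of_nonneg_right h1 (le_of_lt hyx)
          _ = f (l * x) - f x := div_mul_cancel₀ _ (ne_of_gt hyx)
        gcongr
      · rw [huB, hBeq]
        have h1 : f' t2 ≤ f' x := hmm ht2I hxIoo (le_of_lt ht2.2)
        have h2 : f x - f (l⁻¹ * x) ≤ f' x * (x - l⁻¹ * x) := by
          rw [hs2] at h1
          calc f x - f (l⁻¹ * x) = (f x - f (l⁻¹ * x)) / (x - l⁻¹ * x) * (x - l⁻¹ * x) :=
                (div_mul_cancel₀ _ (ne_of_gt hxz)).symm
          _ ≤ f' x * (x - l⁻¹ * x) := mul_le_mul_of_nonneg_right h1 (le_of_lt hxz)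
        gcongr
    · right
      constructor
      · rw [huA, hAeq]
        have h1 : f' t1 ≤ f' x := hmm hxIoo ht1I (le_of_lt ht1.1)
        have h2 : f (l * x) - f x ≤ f' x * (l * x - x) := by
          rw [hs1] at h1
          calc f (l * x) - f x = (f (l * x) - f x) / (l * x - x) * (l * x - x) :=
                (div_mul_cancel₀ _ (ne_of_gt hyx)).symm
          _ ≤ f' x * (l * x - x) := mul_le_mul_of_nonneg_right h1 (le_of_lt hyx)
        gcongr
      · rw [huB, hBeq]
        have h1 : f' x ≤ f' t2 := hmm ht2I hxIoo (le_of_lt ht2.2)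
        have h2 : f' x * (x - l⁻¹ * x) ≤ f x - f (l⁻¹ * x) := by
          rw [hs2] at h1
          calc f' x * (x - l⁻¹ * x) ≤ (f x - f (l⁻¹ * x)) / (x - l⁻¹ * x) * (x - l⁻¹ * x) :=
                mul_le_mul_of_nonneg_right h1 (le_of_lt hxz)
          _ = f x - f (l⁻¹ * x) := div_mul_cancel₀ _ (ne_of_gt hxz)
        gcongr
  -- conclude
  rw [Real.dist_eq]
  have h1 := abs_lt.1 hxA
  have h2 := abs_lt.1 hxB
  have h3 := abs_lt.1 hA
  have h4 := abs_lt.1 hB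
  rw [abs_lt]
  rcases hsand with ⟨hs1', hs2'⟩ | ⟨hs1', hs2'⟩ <;>
    constructor <;> simp only [← hA', ← hB'] at * <;> linarith

/-- Let `g : (0,ε) → (0,∞)` be infinitely differentiable with monotone derivatives near `0`,
with `x g'(x)/g(x) → α ∈ (1,2)` as `x → 0⁺` and `g(x) = x^α ℓ(1/x)` for a slowly varying `ℓ`.
Then for every `p ≥ 1`, `x^p g^{(p)}(x)/g(x) → Γ(α+1)/Γ(α+1-p)` as `x → 0⁺`. -/
theorem stmt_10 (ε : ℝ) (hε : 0 < ε) (α : ℝ) (hα1 : 1 < α) (hα2 : α < 2)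
    (g : ℝ → ℝ) (ℓ : ℝ → ℝ)
    (hℓ : SlowlyVarying ℓ)
    (hgpos : ∀ x ∈ Ioo (0 : ℝ) ε, 0 < g x)
    (hsmooth : ContDiffOn ℝ (⊤ : ℕ∞) g (Ioo (0 : ℝ) ε))
    (hmono : ∀ p : ℕ, MonotoneOn (iteratedDeriv p g) (Ioo (0 : ℝ) ε) ∨
      AntitoneOn (iteratedDeriv p g) (Ioo (0 : ℝ) ε))
    (hrep : ∀ x ∈ Ioo (0 : ℝ) ε, g x = x ^ α * ℓ (1 / x))
    (hlim : Tendsto (fun x => x * deriv g x / g x) (nhdsWithin 0 (Ioi 0)) (nhds α)) :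
    ∀ p : ℕ, 0 < p →
      Tendsto (fun x => x ^ (p : ℕ) * iteratedDeriv p g x / g x)
        (nhdsWithin 0 (Ioi 0))
        (nhds (Real.Gamma (α + 1) / Real.Gamma (α + 1 - p))) := by
  -- ratio limit for g
  have hratio : ∀ l : ℝ, 0 < l →
      Tendsto (fun x => g (l * x) / g x) (𝓝[>] 0) (𝓝 (l ^ α)) := by
    intro l hl
    have hslow : Tendsto (fun x : ℝ => ℓ (l⁻¹ * x⁻¹) / ℓ x⁻¹) (𝓝[>] 0) (𝓝 1) := by
      have := (hℓ.2 l⁻¹ (inv_pos.2 hl)).comp tendsto_inv_nhdsGT_zero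
      exact this
    have h3 : Tendsto (fun x : ℝ => l ^ α * (ℓ (l⁻¹ * x⁻¹) / ℓ x⁻¹)) (𝓝[>] 0)
        (𝓝 (l ^ α)) := by
      have := hslow.const_mul (l ^ α)
      simpa using this
    refine Tendsto.congr' ?_ h3
    have hmem : Ioo (0:ℝ) (min ε (ε / l)) ∈ 𝓝[>] (0:ℝ) :=
      Ioo_mem_nhdsGT_of_mem ⟨le_refl _, lt_min hε (div_pos hε hl)⟩
    filter_upwards [hmem] with x hx
    have hx0 : 0 < x := hx.1
    have hxe : x < ε := lt_of_lt_of_le hx.2 (min_le_left _ _)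
    have hlx : l * x ∈ Ioo (0:ℝ) ε := by
      refine ⟨mul_pos hl hx0, ?_⟩
      have : x < ε / l := lt_of_lt_of_le hx.2 (min_le_right _ _)
      calc l * x < l * (ε / l) := mul_lt_mul_of_pos_left this hl
      _ = ε := by field_simp
    rw [hrep x ⟨hx0, hxe⟩, hrep (l * x) hlx]
    have h1 : (l * x) ^ α = l ^ α * x ^ α :=
      Real.mul_rpow (le_of_lt hl) (le_of_lt hx0)
    have h2 : 1 / (l * x) = l⁻¹ * x⁻¹ := by
      rw [one_div, mul_inv]
    have h4 : 1 / x = x⁻¹ := one_div x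
    rw [h1, h2, h4]
    have hxα : x ^ α ≠ 0 := ne_of_gt (Real.rpow_pos_of_pos hx0 α)
    have hℓx : ℓ x⁻¹ ≠ 0 := ne_of_gt (hℓ.1 x⁻¹ (inv_pos.2 hx0))
    rw [show l ^ α * x ^ α * ℓ (l⁻¹ * x⁻¹) = x ^ α * (l ^ α * ℓ (l⁻¹ * x⁻¹)) from by ring,
      mul_div_mul_left _ _ hxα, mul_div_assoc]
  -- smoothness of iterated derivatives
  have hcd : ∀ m : ℕ, ContDiffOn ℝ (⊤ : ℕ∞) (iteratedDeriv m g) (Ioo (0:ℝ) ε) := by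
    intro m
    induction m with
    | zero => simpa [iteratedDeriv_zero] using hsmooth
    | succ n ih =>
      rw [iteratedDeriv_succ]
      exact ih.deriv_of_isOpen isOpen_Ioo (by simp)
  have hf' : ∀ n : ℕ, ∀ x ∈ Ioo (0:ℝ) ε,
      HasDerivAt (iteratedDeriv n g) (iteratedDeriv (n + 1) g x) x := by
    intro n x hx
    have hd : DifferentiableAt ℝ (iteratedDeriv n g) x :=
      ((hcd n).contDiffAt (isOpen_Ioo.mem_nhds hx)).differentiableAt (by simp)
    rw [iteratedDeriv_succ]
    exact hd.hasDerivAt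
  -- induction
  intro p hp
  induction p, hp using Nat.le_induction with
  | base =>
    have hΓ : Real.Gamma (α + 1) / Real.Gamma (α + 1 - (1:ℕ)) = α := by
      have h0 : α ≠ 0 := by intro h; rw [h] at hα1; linarith
      have h1 : Real.Gamma (α + 1) = α * Real.Gamma α := Real.Gamma_add_one h0
      have h2 : Real.Gamma α ≠ 0 := by
        have := sv_gamma_ne_zero hα1 hα2 0
        simpa using this
      have h3 : α + 1 - ((1:ℕ):ℝ) = α := by push_cast; ring
      rw [h3, h1, mul_div_assoc, div_self h2, mul_one]
    rw [hΓ]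
    simpa only [iteratedDeriv_one, pow_one] using hlim
  | succ n hn ih =>
    have hstep := sv_step ε hε α (Real.Gamma (α + 1) / Real.Gamma (α + 1 - n))
      g (iteratedDeriv n g) (iteratedDeriv (n + 1) g) n hgpos hratio
      (hf' n) (hmono (n + 1)) ih
    have hval : Real.Gamma (α + 1) / Real.Gamma (α + 1 - n) * (α - n)
        = Real.Gamma (α + 1) / Real.Gamma (α + 1 - (n + 1 : ℕ)) := by
      have hαn : α - (n : ℝ) ≠ 0 := by
        intro h
        exact sv_not_int hα1 hα2 n (by push_cast; linarith)
      have h1 : α + 1 - ((n:ℝ)) = (α - n) + 1 := by ring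
      have h2 : Real.Gamma (α + 1 - n) = (α - n) * Real.Gamma (α - n) := by
        rw [h1]; exact Real.Gamma_add_one hαn
      have h3 : Real.Gamma (α - n) ≠ 0 := by
        have := sv_gamma_ne_zero hα1 hα2 (-(n:ℤ))
        simpa [sub_eq_add_neg] using this
      have h4 : α + 1 - ((n:ℝ) + 1) = α - n := by ring
      have h5 : ((n + 1 : ℕ) : ℝ) = (n : ℝ) + 1 := by push_cast; ring
      rw [h5, h4, h2]
      field_simp
    rw [← hval]
    exact hstep
end

section
/- Let S(u) = ℓ(u)·u^{-α} where ℓ is slowly varying and α ∈ (1,2), such that u^p S^{(p)}(u)/S(u) → Γ(1-α)/Γ(1-α-p) as u → ∞ for all p ≥ 0. Write ẑ = 1/(1-z) for z ∈ (0,1). Then for every p ≥ 1 there is a constant C_{α,p} such that the p-th derivative with respect to z of the function z ↦ S(1/(1-z)) is asymptotically equivalent, as z → 1⁻, to C_{α,p}·ẑ^{p+1}·S'(ẑ), which in turn is asymptotically equivalent to -α·C_{α,p}·ẑ^p·S(ẑ). -/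
/-!
Write `w = 1/(1-z)`. Since `w' = w²`, induction gives
`(S ∘ w)⁽ⁿ⁾ = ∑ₖ L(n,k) S⁽ᵏ⁾(w) w^(n+k)` with the unsigned Lah numbers `L(n,k)`. Dividing by
`wⁿ S(w)`, the ratio hypothesis makes each term tend to `L(n,k) cₖ`, where
`cₖ = Γ(1-α)/Γ(1-α-k)` is the falling factorial `(-α)(-α-1)⋯(-α-k+1)`. The Lah numbers turn
falling factorials into rising ones, so the limit is `(-α)(1-α)⋯(n-1-α) = -α C`, nonzero as
`α ∉ ℤ`. Since `w^(n+1) S'(w) / (wⁿ S(w)) → c₁ = -α` as well, all three functions are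
asymptotic to `-α C wⁿ S(w)`.
-/

open Filter Set Asymptotics

open Finset Topology

-- The unsigned Lah numbers `L(n, k) = C(n - 1, k - 1) n! / k!`.
def lah : ℕ → ℕ → ℕ
  | 0, 0 => 1
  | 0, _ + 1 => 0
  | _ + 1, 0 => 0
  | j + 1, k + 1 => (j + k + 1) * lah j (k + 1) + lah j k

theorem lah_eq_zero_of_lt : ∀ {n k : ℕ}, n < k → lah n k = 0
  | 0, _ + 1, _ => rfl
  | n + 1, k + 1, h => by
    rw [lah, lah_eq_zero_of_lt (by omega : n < k + 1), lah_eq_zero_of_lt (by omega : n < k)]; rfl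

theorem self_mul_lah_zero (n : ℕ) : n * lah n 0 = 0 := by
  cases n <;> rfl

theorem sum_range_lah_succ_mul {R : Type*} [CommSemiring R] (n : ℕ) (D : ℕ → R) :
    ∑ k ∈ range (n + 2), (lah (n + 1) k : R) * D k =
      ∑ k ∈ range (n + 1), (lah n k : R) * (D (k + 1) + (n + k) * D k) := by
  set E : ℕ → R := fun k => (n + k) * lah n k * D k
  have hE : ∑ k ∈ range (n + 1), E (k + 1) = ∑ k ∈ range (n + 1), E k := by
    have h0 : E 0 = 0 := by simp [E, ← Nat.cast_mul, self_mul_lah_zero]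
    have hlast : E (n + 1) = 0 := by simp [E, lah_eq_zero_of_lt (Nat.lt_succ_self n)]
    rw [← add_zero (∑ k ∈ range (n + 1), E (k + 1)), ← h0, ← sum_range_succ', sum_range_succ,
      hlast, add_zero]
  rw [sum_range_succ', lah, Nat.cast_zero, zero_mul, add_zero]
  calc _ = ∑ k ∈ range (n + 1), (E (k + 1) + lah n k * D (k + 1)) := by
        refine sum_congr rfl fun k _ => ?_
        simp only [E, lah]; push_cast; ring
    _ = _ := by
        rw [sum_add_distrib, hE, ← sum_add_distrib]
        refine sum_congr rfl fun k _ => ?_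
        simp only [E]; ring

theorem sum_range_lah_mul_eq_ascPochhammer {R : Type*} [CommRing R] {c : ℕ → R} {x : R}
    (hc : ∀ k : ℕ, c (k + 1) = (x - k) * c k) (n : ℕ) :
    ∑ k ∈ range (n + 1), (lah n k : R) * c k = (ascPochhammer R n).eval x * c 0 := by
  induction n with
  | zero => simp [lah]
  | succ n ih =>
    rw [sum_range_lah_succ_mul, ascPochhammer_succ_eval, mul_right_comm, ← ih, sum_mul]
    refine sum_congr rfl fun k _ => ?_
    rw [hc]; ring

theorem Real.Gamma_div_Gamma_sub_succ (s : ℝ) (k : ℕ) :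
    Gamma s / Gamma (s - (k + 1 : ℕ)) = (s - 1 - k) * (Gamma s / Gamma (s - k)) := by
  rcases eq_or_ne (s - 1 - k) 0 with h | h
  · -- `Gamma` vanishes at its poles.
    rw [h, zero_mul, show s - (k + 1 : ℕ) = s - 1 - k by push_cast; ring, h, Gamma_zero,
      div_zero]
  · rw [show s - k = (s - 1 - k) + 1 by ring, Gamma_add_one h,
      show s - (k + 1 : ℕ) = s - 1 - k by push_cast; ring]
    field_simp

theorem Real.Gamma_div_Gamma_sub_natCast_ne_zero {s : ℝ} (hs : ∀ m : ℤ, s ≠ m) (k : ℕ) :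
    Gamma s / Gamma (s - k) ≠ 0 :=
  div_ne_zero (Gamma_ne_zero fun m h => hs (-m) (by simpa using h))
    (Gamma_ne_zero fun m h => hs (k - m) (by push_cast; linarith))

theorem sum_range_lah_mul_Gamma_div_Gamma {s : ℝ} (hs : Real.Gamma s ≠ 0) (n : ℕ) :
    ∑ k ∈ range (n + 1), (lah n k : ℝ) * (Real.Gamma s / Real.Gamma (s - k)) =
      (ascPochhammer ℝ n).eval (s - 1) := by
  rw [sum_range_lah_mul_eq_ascPochhammer fun k => Real.Gamma_div_Gamma_sub_succ s k,
    Nat.cast_zero, sub_zero, div_self hs, mul_one]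

theorem ascPochhammer_eval_ne_zero {x : ℝ} (hx : ∀ m : ℤ, x ≠ m) (n : ℕ) :
    (ascPochhammer ℝ n).eval x ≠ 0 := fun h => by
  obtain ⟨k, -, hk⟩ := (ascPochhammer_eval_eq_zero_iff n x).1 h
  exact hx (-k) (by push_cast; linarith)

theorem tendsto_one_div_one_sub_nhdsLT_one :
    Tendsto (fun z : ℝ => 1 / (1 - z)) (𝓝[<] 1) atTop := by
  have h : Tendsto (fun z : ℝ => 1 - z) (𝓝[<] 1) (𝓝[>] 0) := by
    refine tendsto_nhdsWithin_of_tendsto_nhds_of_eventually_within _ ?_ ?_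
    · exact ((continuous_sub_left 1).tendsto' 1 0 (sub_self 1)).mono_left nhdsWithin_le_nhds
    · filter_upwards [self_mem_nhdsWithin] with z hz
      exact sub_pos.2 hz.out
  simpa only [one_div, Function.comp_def] using tendsto_inv_nhdsGT_zero.comp h

theorem hasDerivAt_one_div_one_sub {z : ℝ} (hz : z ≠ 1) :
    HasDerivAt (fun z : ℝ => 1 / (1 - z)) ((1 / (1 - z)) ^ 2) z := by
  have h := ((hasDerivAt_id' z).const_sub 1).fun_inv (sub_ne_zero.2 hz.symm)
  simp only [one_div]
  exact h.congr_deriv (by field_simp)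

theorem hasDerivAt_one_div_one_sub_pow {z : ℝ} (hz : z ≠ 1) (m : ℕ) :
    HasDerivAt (fun z : ℝ => (1 / (1 - z)) ^ m) (m * (1 / (1 - z)) ^ (m + 1)) z := by
  cases m with
  | zero => simpa using hasDerivAt_const z (1 : ℝ)
  | succ m =>
    exact ((hasDerivAt_one_div_one_sub hz).fun_pow (m + 1)).congr_deriv (by push_cast; ring)

theorem isEquivalent_const_mul_of_tendsto_div {ι : Type*} {l : Filter ι} {f g : ι → ℝ} {K : ℝ}
    (hK : K ≠ 0) (h : Tendsto (fun x => f x / g x) l (𝓝 K)) : f ~[l] fun x => K * g x := by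
  refine isEquivalent_of_tendsto_one ?_
  have := h.div_const K
  rw [div_self hK] at this
  convert this using 2 with x
  simp [div_mul_eq_div_div_swap]

theorem iteratedDeriv_comp_one_div_one_sub {f : ℝ → ℝ} {n : ℕ} {U : Set ℝ} (hU : IsOpen U)
    (h1U : (1 : ℝ) ∉ U)
    (hf : ∀ z ∈ U, ∀ k < n, DifferentiableAt ℝ (iteratedDeriv k f) (1 / (1 - z))) :
    ∀ j ≤ n, ∀ z ∈ U, iteratedDeriv j (fun z => f (1 / (1 - z))) z =
      ∑ k ∈ range (j + 1),
        (lah j k : ℝ) * (iteratedDeriv k f (1 / (1 - z)) * (1 / (1 - z)) ^ (j + k)) := by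
  intro j
  induction j with
  | zero => simp [lah]
  | succ j ih =>
    intro hj z hz
    have hz1 : z ≠ 1 := ne_of_mem_of_not_mem hz h1U
    have hterm : ∀ k ∈ range (j + 1), HasDerivAt
        (fun z => (lah j k : ℝ) * (iteratedDeriv k f (1 / (1 - z)) * (1 / (1 - z)) ^ (j + k)))
        ((lah j k : ℝ) * (iteratedDeriv (k + 1) f (1 / (1 - z)) * (1 / (1 - z)) ^ (j + 1 + (k + 1))
          + (j + k) * (iteratedDeriv k f (1 / (1 - z)) * (1 / (1 - z)) ^ (j + 1 + k)))) z := by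
      intro k hk
      have hDk : HasDerivAt (fun z => iteratedDeriv k f (1 / (1 - z)))
          (iteratedDeriv (k + 1) f (1 / (1 - z)) * (1 / (1 - z)) ^ 2) z := by
        rw [iteratedDeriv_succ]
        exact (hf z hz k (by simp at hk; omega)).hasDerivAt.comp z (hasDerivAt_one_div_one_sub hz1)
      refine ((hDk.mul (hasDerivAt_one_div_one_sub_pow hz1 (j + k))).const_mul _).congr_deriv ?_
      push_cast; ring
    rw [iteratedDeriv_succ, (eventuallyEq_of_mem (hU.mem_nhds hz) (ih (by omega))).deriv_eq,
      (HasDerivAt.fun_sum hterm).deriv, sum_range_lah_succ_mul]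

theorem isEquivalent_iteratedDeriv_comp_one_div_one_sub {f : ℝ → ℝ} {c : ℕ → ℝ} {n : ℕ} {K : ℝ}
    (hf : ∀ k ≤ n, Tendsto (fun u => u ^ k * iteratedDeriv k f u / f u) atTop (𝓝 (c k)))
    (hc : ∀ k < n, c (k + 1) ≠ 0) (hK : ∑ k ∈ range (n + 1), (lah n k : ℝ) * c k = K)
    (hK0 : K ≠ 0) :
    iteratedDeriv n (fun z => f (1 / (1 - z))) ~[𝓝[<] 1]
      fun z => K * ((1 / (1 - z)) ^ n * f (1 / (1 - z))) := by
  have hw := tendsto_one_div_one_sub_nhdsLT_one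
  -- A nonzero limit forces `f⁽ᵏ⁺¹⁾ ≠ 0`, and a function with nonzero derivative is differentiable.
  have hdiff : ∀ᶠ z in 𝓝[<] 1, ∀ k < n, DifferentiableAt ℝ (iteratedDeriv k f) (1 / (1 - z)) := by
    refine eventually_all_finite (finite_lt_nat n) |>.2 fun k hk => ?_
    filter_upwards [hw.eventually ((hf (k + 1) hk).eventually_ne (hc k hk))] with z hz
    refine differentiableAt_of_deriv_ne_zero fun h => hz ?_
    rw [iteratedDeriv_succ, h, mul_zero, zero_div]
  obtain ⟨z₀, hz₀, hsub⟩ := mem_nhdsLT_iff_exists_Ioo_subset.1 hdiff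
  have hformula := iteratedDeriv_comp_one_div_one_sub isOpen_Ioo (fun h => lt_irrefl _ h.2) hsub
    n le_rfl
  refine isEquivalent_const_mul_of_tendsto_div hK0 (hK ▸ (tendsto_finsetSum _ fun k hk =>
    ((hf k (by simp at hk; omega)).comp hw).const_mul (lah n k : ℝ)).congr' ?_)
  filter_upwards [Ioo_mem_nhdsLT hz₀] with z hz
  have hw0 : 1 / (1 - z) ≠ 0 := one_div_ne_zero (sub_ne_zero.2 hz.2.ne')
  rw [hformula z hz, sum_div]
  refine sum_congr rfl fun k _ => ?_
  simp only [Function.comp_apply, pow_add]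
  field_simp

theorem isEquivalent_mul_pow_succ_deriv_comp_one_div_one_sub {f : ℝ → ℝ} {c : ℝ} (C : ℝ)
    (n : ℕ) (hf : Tendsto (fun u => u ^ 1 * iteratedDeriv 1 f u / f u) atTop (𝓝 c))
    (hcC : C * c ≠ 0) :
    (fun z => C * (1 / (1 - z)) ^ (n + 1) * deriv f (1 / (1 - z))) ~[𝓝[<] 1]
      fun z => C * c * ((1 / (1 - z)) ^ n * f (1 / (1 - z))) := by
  refine isEquivalent_const_mul_of_tendsto_div hcC
    ((hf.comp tendsto_one_div_one_sub_nhdsLT_one).const_mul C |>.congr' ?_)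
  filter_upwards [self_mem_nhdsWithin] with z hz
  have hw0 : 1 / (1 - z) ≠ 0 := one_div_ne_zero (sub_ne_zero.2 (ne_of_gt hz.out))
  rw [Function.comp_apply, iteratedDeriv_one]
  generalize 1 / (1 - z) = w at hw0 ⊢
  field_simp
  ring

theorem stmt_11_general (α : ℝ) (hα1 : 1 < α) (hα2 : α < 2)
    (S : ℝ → ℝ)
    (hratio : ∀ p : ℕ,
      Tendsto (fun u => u ^ (p : ℕ) * iteratedDeriv p S u / S u) atTop
        (nhds (Real.Gamma (1 - α) / Real.Gamma (1 - α - p)))) :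
    ∀ p : ℕ, 1 ≤ p → ∃ C : ℝ,
      (IsEquivalent (nhdsWithin 1 (Iio (1 : ℝ)))
          (iteratedDeriv p (fun z => S (1 / (1 - z))))
          (fun z => C * (1 / (1 - z)) ^ (p + 1) * deriv S (1 / (1 - z)))) ∧
      (IsEquivalent (nhdsWithin 1 (Iio (1 : ℝ)))
          (fun z => C * (1 / (1 - z)) ^ (p + 1) * deriv S (1 / (1 - z)))
          (fun z => -α * C * (1 / (1 - z)) ^ (p : ℕ) * S (1 / (1 - z)))) := by
  rintro p hp
  obtain ⟨q, rfl⟩ : ∃ q, p = q + 1 := ⟨p - 1, by omega⟩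
  have hα : ∀ n : ℤ, α ≠ n := by
    rintro n rfl
    have : (1 : ℤ) < n := by exact_mod_cast hα1
    have : n < 2 := by exact_mod_cast hα2
    omega
  have hs : ∀ n : ℤ, 1 - α ≠ n := fun n h => hα (1 - n) (by push_cast; linarith)
  have hc := Real.Gamma_div_Gamma_sub_natCast_ne_zero hs
  have hsum := sum_range_lah_mul_Gamma_div_Gamma (div_ne_zero_iff.1 (hc 0)).1
  have hc1 : Real.Gamma (1 - α) / Real.Gamma (1 - α - (1 : ℕ)) = -α := by
    simpa [lah, sum_range_succ] using hsum 1
  set C := (ascPochhammer ℝ q).eval (1 - α)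
  have hK : (ascPochhammer ℝ (q + 1)).eval (1 - α - 1) = -α * C := by
    simp [ascPochhammer_succ_left, C, neg_add_eq_sub]
  have hK0 : -α * C ≠ 0 :=
    hK ▸ ascPochhammer_eval_ne_zero (fun n h => hα (-n) (by push_cast; linarith)) (q + 1)
  have hu := isEquivalent_iteratedDeriv_comp_one_div_one_sub (fun k _ => hratio k)
    (fun k _ => hc (k + 1)) ((hsum (q + 1)).trans hK) hK0
  have hv := isEquivalent_mul_pow_succ_deriv_comp_one_div_one_sub C (q + 1) (hratio 1)
    (by rwa [← hc1, mul_comm] at hK0)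
  rw [hc1, mul_comm C] at hv
  exact ⟨C, hu.trans hv.symm, hv.congr_right (Eventually.of_forall fun z => by ring)⟩

/-- Let `S(u) = ℓ(u) u^{-α}` with `ℓ` slowly varying and `α ∈ (1,2)`, such that
`u^p S^{(p)}(u)/S(u) → Γ(1-α)/Γ(1-α-p)` as `u → ∞` for all `p ≥ 0`. Writing
`ẑ = 1/(1-z)`, for every `p ≥ 1` there is a constant `C_{α,p}` such that, as `z → 1⁻`,
the `p`-th derivative of `z ↦ S(1/(1-z))` is `∼ C_{α,p} ẑ^{p+1} S'(ẑ)`, which is itself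
`∼ -α C_{α,p} ẑ^p S(ẑ)`. -/
theorem stmt_11 (α : ℝ) (hα1 : 1 < α) (hα2 : α < 2) (ℓ : ℝ → ℝ) (hℓ : SlowlyVarying ℓ)
    (S : ℝ → ℝ) (hS : ∀ u : ℝ, 0 < u → S u = ℓ u * u ^ (-α))
    (hratio : ∀ p : ℕ,
      Tendsto (fun u => u ^ (p : ℕ) * iteratedDeriv p S u / S u) atTop
        (nhds (Real.Gamma (1 - α) / Real.Gamma (1 - α - p)))) :
    ∀ p : ℕ, 1 ≤ p → ∃ C : ℝ,
      (IsEquivalent (nhdsWithin 1 (Iio (1 : ℝ)))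
          (iteratedDeriv p (fun z => S (1 / (1 - z))))
          (fun z => C * (1 / (1 - z)) ^ (p + 1) * deriv S (1 / (1 - z)))) ∧
      (IsEquivalent (nhdsWithin 1 (Iio (1 : ℝ)))
          (fun z => C * (1 / (1 - z)) ^ (p + 1) * deriv S (1 / (1 - z)))
          (fun z => -α * C * (1 / (1 - z)) ^ (p : ℕ) * S (1 / (1 - z)))) :=
  stmt_11_general α hα1 hα2 S hratio
end

section
/- Let μ be an offspring distribution on ℤ_{≥0} with μ(1) > 0, let T be a Bienaymé–Galton–Watson tree with offspring law μ, let W' be a random walk with i.i.d. nonnegative integer steps of law ν'(i) = μ(i+1)/(1-μ(0)) for i ≥ 0, and let B_n be a Binomial(n, μ(0)) random variable independent of W'. Then for every n ≥ k ≥ 1, P(T has exactly n vertices and k leaves) = (1/n)·P(B_n = k)·P(W'_{n-k} = k-1). -/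
/-
A plane tree is coded by its Łukasiewicz word, the numbers of children listed in depth-first
order. A tree with `n` vertices and `k` leaves has a word of length `n` and sum `n - 1` with `k`
zeros, and its BGW weight is the product of `μ` over the letters. By the cycle lemma every word
of length `n` and sum `n - 1` has exactly one rotation that is a Łukasiewicz word, so the pairs
(rotation, tree) biject with these words and `n · P(T ∈ 𝕋_n^k) = ∑_x ∏_i μ(x_i)`. Splitting a
word into its zero set (`n choose k` choices, weight `μ(0)^k`) and its `n - k` positive letters,
which lowered by one sum to `k - 1`, gives the binomial and the random-walk factors once
`(1 - μ(0))^(n - k)` is distributed over the `n - k` steps.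
-/

/-- Rooted planar trees: a tree is a root together with an ordered (possibly empty) list of
subtrees. -/
inductive PTree where
  | node : List PTree → PTree

namespace PTree

/-- Number of vertices. -/
def size : PTree → ℕ
  | .node ts => 1 + (ts.attach.map (fun t => size t.1)).sum
decreasing_by
  have := List.sizeOf_lt_of_mem t.2
  simp only [PTree.node.sizeOf_spec]; omega

/-- Number of leaves (vertices with no children). -/
def leaves : PTree → ℕ
  | .node [] => 1
  | .node ts => (ts.attach.map (fun t => leaves t.1)).sum
decreasing_by
  have := List.sizeOf_lt_of_mem t.2
  simp only [PTree.node.sizeOf_spec]; omega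

/-- BGW weight of a tree: `∏_{u ∈ τ} μ(c_u(τ))`, the probability that a `μ`-BGW tree equals
this tree. -/
def weight (μ : ℕ → ℝ) : PTree → ℝ
  | .node ts => μ ts.length * (ts.attach.map (fun t => weight μ t.1)).prod
decreasing_by
  have := List.sizeOf_lt_of_mem t.2
  simp only [PTree.node.sizeOf_spec]; omega

end PTree

open scoped Classical

namespace PTree

@[elab_as_elim, induction_eliminator]
theorem induction {motive : PTree → Prop}
    (node : ∀ ts, (∀ t ∈ ts, motive t) → motive (.node ts)) (τ : PTree) : motive τ :=
  match τ with
  | .node ts => node ts fun t _ => induction node t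

theorem size_node (ts : List PTree) : size (.node ts) = 1 + (ts.map size).sum := by
  rw [size]; simp

theorem weight_node (μ : ℕ → ℝ) (ts : List PTree) :
    weight μ (.node ts) = μ ts.length * (ts.map (weight μ)).prod := by
  rw [weight]; simp

theorem leaves_node_nil : leaves (.node []) = 1 := by
  rw [leaves]

theorem leaves_node_of_ne_nil {ts : List PTree} (h : ts ≠ []) :
    leaves (.node ts) = (ts.map leaves).sum := by
  rw [leaves]
  · simp
  · simpa using h

/-- The paper's Łukasiewicz path has steps `c - 1` for the letters `c` of this word. -/
def lukasiewicz : PTree → List ℕ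
  | .node ts => ts.length :: (ts.map lukasiewicz).flatten

theorem length_lukasiewicz (τ : PTree) : (lukasiewicz τ).length = τ.size := by
  induction τ with
  | node ts ih =>
    rw [lukasiewicz, size_node, List.length_cons, List.length_flatten, List.map_map, add_comm]
    exact congrArg (1 + ·) (congrArg List.sum (List.map_congr_left ih))

theorem count_zero_lukasiewicz (τ : PTree) : (lukasiewicz τ).count 0 = τ.leaves := by
  induction τ with
  | node ts ih =>
    rcases eq_or_ne ts [] with rfl | hts
    · simp [lukasiewicz, leaves_node_nil]
    · rw [lukasiewicz, List.count_cons_of_ne (by simpa using hts), List.count_flatten,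
        List.map_map, leaves_node_of_ne_nil hts]
      exact congrArg List.sum (List.map_congr_left ih)

theorem prod_map_lukasiewicz (μ : ℕ → ℝ) (τ : PTree) :
    ((lukasiewicz τ).map μ).prod = weight μ τ := by
  induction τ with
  | node ts ih =>
    rw [lukasiewicz, weight_node, List.map_cons, List.prod_cons, List.map_flatten,
      List.prod_flatten, List.map_map, List.map_map]
    exact congrArg (μ ts.length * ·) (congrArg List.prod (List.map_congr_left ih))

end PTree

/-- `w` is the Łukasiewicz word of a forest of `j` trees: the path with steps `c - 1` stays
above `-j` before its last step and ends at `-j`. -/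
def IsForestCode (j : ℕ) (w : List ℕ) : Prop :=
  w.length = w.sum + j ∧ ∀ i < w.length, i < (w.take i).sum + j

theorem isForestCode_nil : IsForestCode 0 [] := by
  simp [IsForestCode]

theorem IsForestCode.pos {j c : ℕ} {w : List ℕ} (h : IsForestCode j (c :: w)) : 0 < j := by
  simpa using h.2 0 (by simp)

theorem isForestCode_succ_cons_iff {j c : ℕ} {w : List ℕ} :
    IsForestCode (j + 1) (c :: w) ↔ IsForestCode (c + j) w := by
  simp only [IsForestCode, List.length_cons, List.sum_cons]
  refine and_congr (by omega) ⟨fun h i hi => ?_, fun h i hi => ?_⟩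
  · have := h (i + 1) (by omega)
    simp only [List.take_succ_cons, List.sum_cons] at this
    omega
  · cases i with
    | zero => simp
    | succ i =>
      have := h i (by omega)
      simp only [List.take_succ_cons, List.sum_cons]
      omega

theorem IsForestCode.append {a b : ℕ} {u v : List ℕ} (hu : IsForestCode a u)
    (hv : IsForestCode b v) : IsForestCode (a + b) (u ++ v) := by
  refine ⟨by simp [hu.1, hv.1]; omega, fun i hi => ?_⟩
  rw [List.take_append, List.sum_append]
  rcases lt_or_ge i u.length with hiu | hiu
  · have := hu.2 i hiu
    omega
  · rw [List.take_of_length_le hiu]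
    have := hv.2 (i - u.length) (by rw [List.length_append] at hi; omega)
    have := hu.1
    omega

namespace PTree

theorem isForestCode_lukasiewicz (τ : PTree) : IsForestCode 1 (lukasiewicz τ) := by
  induction τ with
  | node ts ih =>
    rw [lukasiewicz, isForestCode_succ_cons_iff, add_zero]
    induction ts with
    | nil => exact isForestCode_nil
    | cons t ts ih' =>
      rw [List.map_cons, List.flatten_cons, List.length_cons, add_comm]
      exact (ih t (by simp)).append (ih' fun t ht => ih t (by simp [ht]))

theorem sum_lukasiewicz_add_one (τ : PTree) : (lukasiewicz τ).sum + 1 = τ.size := by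
  rw [← length_lukasiewicz, (isForestCode_lukasiewicz τ).1]

theorem exists_forest_of_isForestCode {j : ℕ} {w : List ℕ} (hw : IsForestCode j w) :
    ∃ ts : List PTree, ts.length = j ∧ (ts.map lukasiewicz).flatten = w := by
  induction w generalizing j with
  | nil => exact ⟨[], by simp_all [IsForestCode], rfl⟩
  | cons c w ih =>
    obtain ⟨j, rfl⟩ := Nat.exists_eq_add_one_of_ne_zero hw.pos.ne'
    obtain ⟨ts, hlen, hts⟩ := ih (isForestCode_succ_cons_iff.1 hw)
    -- the first `c` trees of the forest coded by `w` become the children of a new root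
    refine ⟨.node (ts.take c) :: ts.drop c, by simp; omega, ?_⟩
    rw [List.map_cons, List.flatten_cons, lukasiewicz, List.length_take_of_le (by omega),
      List.cons_append, ← List.flatten_append, ← List.map_append, List.take_append_drop, hts]

theorem exists_lukasiewicz_eq {w : List ℕ} (hw : IsForestCode 1 w) :
    ∃ τ, lukasiewicz τ = w := by
  obtain ⟨ts, hlen, hts⟩ := exists_forest_of_isForestCode hw
  obtain ⟨τ, rfl⟩ := List.length_eq_one_iff.1 hlen
  exact ⟨τ, by simpa using hts⟩

theorem lukasiewicz_append_inj {τ σ : PTree} {u v : List ℕ}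
    (h : lukasiewicz τ ++ u = lukasiewicz σ ++ v) : τ = σ ∧ u = v := by
  induction τ generalizing σ u v with
  | node ts ih =>
    obtain ⟨ss⟩ := σ
    rw [lukasiewicz, lukasiewicz, List.cons_append, List.cons_append, List.cons.injEq] at h
    obtain ⟨hlen, h⟩ := h
    suffices ts = ss ∧ u = v from ⟨congrArg _ this.1, this.2⟩
    induction ts generalizing ss with
    | nil => simp_all [eq_comm]
    | cons t ts ih' =>
      obtain _ | ⟨s, ss⟩ := ss
      · simp at hlen
      simp only [List.map_cons, List.flatten_cons, List.append_assoc] at h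
      obtain ⟨rfl, hrest⟩ := ih t (by simp) h
      obtain ⟨rfl, rfl⟩ := ih' (fun t ht => ih t (by simp [ht])) ss (by simpa using hlen) hrest
      exact ⟨rfl, rfl⟩

theorem lukasiewicz_injective : Function.Injective lukasiewicz := fun τ σ h =>
  (lukasiewicz_append_inj (u := []) (v := []) (by simpa using h)).1

end PTree

namespace List

theorem sum_take_rotate_add {w : List ℕ} {r j : ℕ} (hr : r ≤ w.length) (hj : j ≤ w.length) :
    ((w.rotate r).take j).sum + ((w ++ w).take r).sum = ((w ++ w).take (r + j)).sum := by
  have hwindow : (w.rotate r).take j = ((w ++ w).drop r).take j := by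
    rw [rotate_eq_drop_append_take hr, drop_append_of_le_length hr, take_append, take_append,
      length_drop, take_take, min_eq_left (by omega)]
  rw [hwindow, take_add, sum_append, add_comm]

/-- The Łukasiewicz path of `w ++ w`, whose windows of length `w.length` are the rotations
of `w`. -/
def doubledPath (w : List ℕ) (i : ℕ) : ℤ := (((w ++ w).take i).sum : ℤ) - i

theorem doubledPath_length_add {w : List ℕ} (hw : w.length = w.sum + 1) {i : ℕ}
    (hi : i ≤ w.length) : w.doubledPath (w.length + i) = w.doubledPath i - 1 := by
  have hlong : (w ++ w).take (w.length + i) = w ++ w.take i := by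
    rw [take_append, take_of_length_le (by omega), Nat.add_sub_cancel_left]
  rw [doubledPath, doubledPath, hlong, take_append_of_le_length hi, sum_append]
  omega

theorem isForestCode_one_rotate_iff {w : List ℕ} (hw : w.length = w.sum + 1) {r : ℕ}
    (hr : r ≤ w.length) :
    IsForestCode 1 (w.rotate r) ↔ ∀ j < w.length, w.doubledPath r ≤ w.doubledPath (r + j) := by
  have hperm := w.rotate_perm r
  simp only [IsForestCode, hperm.length_eq, hperm.sum_eq, hw, true_and, doubledPath]
  refine forall₂_congr fun j hj => ?_
  have := sum_take_rotate_add hr (by omega : j ≤ w.length)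
  omega

theorem not_isForestCode_one_rotate_of_lt {w : List ℕ} (hw : w.length = w.sum + 1) {r s : ℕ}
    (hrs : r < s) (hs : s < w.length) (hr : IsForestCode 1 (w.rotate r)) :
    ¬ IsForestCode 1 (w.rotate s) := by
  intro hs'
  have hr_le_s := (isForestCode_one_rotate_iff hw (by omega)).1 hr (s - r) (by omega)
  have hs_le_r := (isForestCode_one_rotate_iff hw hs.le).1 hs' (w.length - s + r) (by omega)
  rw [Nat.add_sub_cancel' hrs.le] at hr_le_s
  rw [show s + (w.length - s + r) = w.length + r by omega, doubledPath_length_add hw (by omega)]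
    at hs_le_r
  omega

/-- The cycle lemma. -/
theorem existsUnique_isForestCode_one_rotate {w : List ℕ} (hw : w.length = w.sum + 1) :
    ∃! r, r < w.length ∧ IsForestCode 1 (w.rotate r) := by
  have hmin : ∃ r, r < w.length ∧ ∀ m < w.length, w.doubledPath r ≤ w.doubledPath m := by
    obtain ⟨r, hr, h⟩ := (Finset.range w.length).exists_min_image w.doubledPath
      ⟨0, by simp [hw]⟩
    exact ⟨r, by simpa using hr, fun m hm => h m (by simpa using hm)⟩
  -- the good rotation starts at the first minimum of the path
  obtain ⟨hr, hrmin⟩ := Nat.find_spec hmin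
  have hgood : IsForestCode 1 (w.rotate (Nat.find hmin)) := by
    refine (isForestCode_one_rotate_iff hw hr.le).2 fun j hj => ?_
    rcases lt_or_ge (Nat.find hmin + j) w.length with h | h
    · exact hrmin _ h
    obtain ⟨m, hm⟩ : ∃ m, Nat.find hmin + j = w.length + m := ⟨_, (Nat.add_sub_of_le h).symm⟩
    have hm_not_min := Nat.find_min hmin (show m < Nat.find hmin by omega)
    push Not at hm_not_min
    obtain ⟨m', hm', hlt⟩ := hm_not_min (by omega)
    rw [hm, doubledPath_length_add hw (by omega)]
    have := hrmin m' hm'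
    omega
  refine ⟨Nat.find hmin, ⟨hr, hgood⟩, fun s ⟨hs, hs'⟩ => ?_⟩
  rcases lt_trichotomy s (Nat.find hmin) with hlt | rfl | hlt
  · exact absurd hgood (not_isForestCode_one_rotate_of_lt hw hlt hr hs')
  · rfl
  · exact absurd hs' (not_isForestCode_one_rotate_of_lt hw hlt hs hgood)

end List

namespace PTree

theorem lukasiewicz_rotate_size_sub_rotate (τ : PTree) {s : ℕ} (hs : s ≤ τ.size) :
    ((lukasiewicz τ).rotate (τ.size - s)).rotate s = lukasiewicz τ := by
  rw [List.rotate_rotate, Nat.sub_add_cancel hs, ← length_lukasiewicz, List.rotate_length]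

theorem eq_of_rotate_lukasiewicz_eq {s₁ s₂ : ℕ} {τ₁ τ₂ : PTree} (hs₁ : s₁ < τ₁.size)
    (hs₂ : s₂ < τ₂.size)
    (h : (lukasiewicz τ₁).rotate (τ₁.size - s₁) = (lukasiewicz τ₂).rotate (τ₂.size - s₂)) :
    s₁ = s₂ ∧ τ₁ = τ₂ := by
  set w := (lukasiewicz τ₁).rotate (τ₁.size - s₁)
  have hperm : w.Perm (lukasiewicz τ₁) := List.rotate_perm _ _
  have hw : w.length = w.sum + 1 := by
    rw [hperm.length_eq, hperm.sum_eq, (isForestCode_lukasiewicz τ₁).1]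
  have hlen : w.length = τ₁.size := by rw [hperm.length_eq, length_lukasiewicz]
  have hsize : τ₁.size = τ₂.size := by rw [← hlen, h, List.length_rotate, length_lukasiewicz]
  have hgood₁ : IsForestCode 1 (w.rotate s₁) := by
    rw [lukasiewicz_rotate_size_sub_rotate τ₁ hs₁.le]; exact isForestCode_lukasiewicz τ₁
  have hgood₂ : IsForestCode 1 (w.rotate s₂) := by
    rw [h, lukasiewicz_rotate_size_sub_rotate τ₂ hs₂.le]; exact isForestCode_lukasiewicz τ₂
  obtain rfl : s₁ = s₂ := (List.existsUnique_isForestCode_one_rotate hw).unique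
    ⟨by omega, hgood₁⟩ ⟨by omega, hgood₂⟩
  refine ⟨rfl, lukasiewicz_injective ?_⟩
  rw [← lukasiewicz_rotate_size_sub_rotate τ₁ hs₁.le,
    ← lukasiewicz_rotate_size_sub_rotate τ₂ hs₂.le]
  exact congrArg (List.rotate · s₁) h

theorem exists_rotate_lukasiewicz_eq {w : List ℕ} (hw : w.length = w.sum + 1) :
    ∃ s < w.length, ∃ τ : PTree, τ.size = w.length ∧ (lukasiewicz τ).rotate (τ.size - s) = w := by
  obtain ⟨s, ⟨hs, hgood⟩, -⟩ := List.existsUnique_isForestCode_one_rotate hw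
  obtain ⟨τ, hτ⟩ := exists_lukasiewicz_eq hgood
  have hsize : τ.size = w.length := by rw [← length_lukasiewicz, hτ, List.length_rotate]
  refine ⟨s, hs, τ, hsize, ?_⟩
  rw [hτ, hsize, List.rotate_rotate, Nat.add_sub_cancel' hs.le, List.rotate_length]

end PTree

open Finset

theorem List.ofFn_getD_of_length_eq {α : Type*} {n : ℕ} {l : List α} (d : α)
    (h : l.length = n) : List.ofFn (fun i : Fin n => l.getD i d) = l := by
  subst h
  conv_rhs => rw [← List.ofFn_getElem (xs := l)]
  simp

theorem List.count_ofFn {α : Type*} [DecidableEq α] {n : ℕ} (x : Fin n → α) (a : α) :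
    (List.ofFn x).count a = #{i | x i = a} := by
  rw [← Multiset.coe_count, ← Fin.univ_val_map, Multiset.count_map, card_def, filter_val]
  simp [eq_comm]

/-- Steps, shifted by one, of the walks `W` of length `n` with `W_n = -1` and exactly `k` steps
equal to `-1`. -/
def walkTuples (n k : ℕ) : Finset (Fin n → ℕ) :=
  {x ∈ Nat.antidiagonalTuple n (n - 1) | #{i | x i = 0} = k}

theorem mem_walkTuples_iff {n k : ℕ} {x : Fin n → ℕ} :
    x ∈ walkTuples n k ↔ (List.ofFn x).sum = n - 1 ∧ (List.ofFn x).count 0 = k := by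
  rw [walkTuples, mem_filter, Nat.mem_antidiagonalTuple, List.sum_ofFn, List.count_ofFn]

namespace PTree

theorem finite_setOf_size_eq (n : ℕ) : {τ : PTree | τ.size = n}.Finite := by
  refine ((Nat.antidiagonalTuple n (n - 1)).finite_toSet.image List.ofFn).preimage
    lukasiewicz_injective.injOn |>.subset fun τ hτ => ?_
  have hτ : τ.size = n := hτ
  have hlen : (lukasiewicz τ).length = n := by rw [length_lukasiewicz, hτ]
  refine ⟨fun i => (lukasiewicz τ).getD i 0, ?_, List.ofFn_getD_of_length_eq 0 hlen⟩
  rw [mem_coe, Nat.mem_antidiagonalTuple, ← List.sum_ofFn, List.ofFn_getD_of_length_eq 0 hlen]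
  have := sum_lukasiewicz_add_one τ
  omega

noncomputable def sizeLeavesFinset (n k : ℕ) : Finset PTree :=
  ((finite_setOf_size_eq n).subset fun _ h => h.1 :
    {τ : PTree | τ.size = n ∧ τ.leaves = k}.Finite).toFinset

theorem mem_sizeLeavesFinset {n k : ℕ} {τ : PTree} :
    τ ∈ sizeLeavesFinset n k ↔ τ.size = n ∧ τ.leaves = k :=
  Set.Finite.mem_toFinset _

theorem natCast_mul_sum_weight (μ : ℕ → ℝ) {n : ℕ} (hn : 0 < n) (k : ℕ) :
    (n : ℝ) * ∑ τ ∈ sizeLeavesFinset n k, weight μ τ = ∑ x ∈ walkTuples n k, ∏ i, μ (x i) := by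
  have hcount : ∑ p ∈ (univ : Finset (Fin n)) ×ˢ sizeLeavesFinset n k, weight μ p.2 =
      n * ∑ τ ∈ sizeLeavesFinset n k, weight μ τ := by
    simp [sum_product]
  have hlen : ∀ (s : ℕ) (τ : PTree), τ.size = n →
      ((lukasiewicz τ).rotate (τ.size - s)).length = n := fun s τ h => by
    rw [List.length_rotate, length_lukasiewicz, h]
  rw [← hcount]
  -- rotating the image of `(s, τ)` back by `s` recovers the Łukasiewicz word of `τ`
  refine sum_bij (fun p _ i => ((lukasiewicz p.2).rotate (p.2.size - p.1)).getD i 0)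
    (fun ⟨s, τ⟩ hp => ?_) (fun ⟨s₁, τ₁⟩ hp₁ ⟨s₂, τ₂⟩ hp₂ heq => ?_) (fun x hx => ?_)
    (fun ⟨s, τ⟩ hp => ?_)
  all_goals simp only [mem_product, mem_univ, true_and, mem_sizeLeavesFinset] at *
  · have hperm := (lukasiewicz τ).rotate_perm (τ.size - s)
    rw [mem_walkTuples_iff, List.ofFn_getD_of_length_eq 0 (hlen s τ hp.1), hperm.sum_eq,
      hperm.count_eq, count_zero_lukasiewicz, hp.2, ← hp.1, ← sum_lukasiewicz_add_one]
    exact ⟨(Nat.add_sub_cancel _ _).symm, rfl⟩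
  · have := congrArg List.ofFn heq
    rw [List.ofFn_getD_of_length_eq 0 (hlen s₁ τ₁ hp₁.1),
      List.ofFn_getD_of_length_eq 0 (hlen s₂ τ₂ hp₂.1)] at this
    obtain ⟨hs, rfl⟩ := eq_of_rotate_lukasiewicz_eq (by omega) (by omega) this
    exact Prod.ext (Fin.ext hs) rfl
  · rw [mem_walkTuples_iff] at hx
    have hw : (List.ofFn x).length = (List.ofFn x).sum + 1 := by
      rw [List.length_ofFn, hx.1]; omega
    obtain ⟨s, hs, τ, hsize, hτ⟩ := exists_rotate_lukasiewicz_eq hw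
    rw [List.length_ofFn] at hs hsize
    refine ⟨(⟨s, hs⟩, τ), ⟨hsize, ?_⟩, ?_⟩
    · rw [← count_zero_lukasiewicz, ← ((lukasiewicz τ).rotate_perm (τ.size - s)).count_eq, hτ,
        hx.2]
    · funext i
      simp [hτ]
  · rw [← prod_map_lukasiewicz, ← (((lukasiewicz τ).rotate_perm (τ.size - s)).map μ).prod_eq,
      ← List.prod_ofFn]
    conv_lhs => rw [← List.ofFn_getD_of_length_eq 0 (hlen s τ hp.1), List.map_ofFn]
    rfl

end PTree

section ZeroSet

variable {α : Type*} [Fintype α] [LinearOrder α] {A : Finset α} {k m : ℕ}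

noncomputable def withZeroSet (hA : #A = k) (hAc : #Aᶜ = m) (y : Fin m → ℕ) : α → ℕ :=
  fun i => Sum.elim (fun _ => 0) (fun j => y j + 1) ((finSumEquivOfFinset hA hAc).symm i)

variable (hA : #A = k) (hAc : #Aᶜ = m) (y : Fin m → ℕ)

@[simp]
theorem withZeroSet_orderEmbOfFin (a : Fin k) :
    withZeroSet hA hAc y (A.orderEmbOfFin hA a) = 0 := by
  rw [← finSumEquivOfFinset_inl hA hAc, withZeroSet, Equiv.symm_apply_apply, Sum.elim_inl]

@[simp]
theorem withZeroSet_compl_orderEmbOfFin (j : Fin m) :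
    withZeroSet hA hAc y (Aᶜ.orderEmbOfFin hAc j) = y j + 1 := by
  rw [← finSumEquivOfFinset_inr hA hAc, withZeroSet, Equiv.symm_apply_apply, Sum.elim_inr]

theorem filter_withZeroSet_eq_zero : ({i | withZeroSet hA hAc y i = 0} : Finset α) = A := by
  ext i
  obtain ⟨a | j, rfl⟩ := (finSumEquivOfFinset hA hAc).surjective i
  · simp [orderEmbOfFin_mem]
  · simpa using mem_compl.1 (orderEmbOfFin_mem Aᶜ hAc j)

theorem sum_withZeroSet : ∑ i, withZeroSet hA hAc y i = ∑ j, y j + m := by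
  rw [← (finSumEquivOfFinset hA hAc).sum_comp, Fintype.sum_sum_type]
  simp [sum_add_distrib]

theorem prod_withZeroSet {M : Type*} [CommMonoid M] (f : ℕ → M) :
    ∏ i, f (withZeroSet hA hAc y i) = f 0 ^ k * ∏ j, f (y j + 1) := by
  rw [← (finSumEquivOfFinset hA hAc).prod_comp, Fintype.prod_sum_type]
  simp

end ZeroSet

theorem sum_walkTuples_filter_zeroSet {R : Type*} [CommSemiring R] (f : ℕ → R) {n k : ℕ}
    (hk : 1 ≤ k) (hkn : k ≤ n) {A : Finset (Fin n)} (hA : #A = k) :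
    ∑ x ∈ walkTuples n k with ({i | x i = 0} : Finset (Fin n)) = A, ∏ i, f (x i) =
      f 0 ^ k * ∑ y ∈ Nat.antidiagonalTuple (n - k) (k - 1), ∏ j, f (y j + 1) := by
  have hAc : #Aᶜ = n - k := by rw [card_compl, Fintype.card_fin, hA]
  have hzero : ∀ x ∈ {x ∈ walkTuples n k | ({i | x i = 0} : Finset (Fin n)) = A}, ∀ i,
      x i = 0 ↔ i ∈ A := by
    intro x hx i
    rw [← (mem_filter.1 hx).2, mem_filter]
    simp
  have hcompl : ∀ x ∈ {x ∈ walkTuples n k | ({i | x i = 0} : Finset (Fin n)) = A}, ∀ j,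
      x (Aᶜ.orderEmbOfFin hAc j) - 1 + 1 = x (Aᶜ.orderEmbOfFin hAc j) := fun x hx j =>
    Nat.sub_add_cancel (Nat.one_le_iff_ne_zero.2 fun h =>
      mem_compl.1 (orderEmbOfFin_mem Aᶜ hAc j) ((hzero x hx _).1 h))
  rw [mul_sum]
  symm
  refine sum_nbij' (withZeroSet hA hAc) (fun x j => x (Aᶜ.orderEmbOfFin hAc j) - 1)
    (fun y hy => ?_) (fun x hx => ?_) (fun y _ => ?_) (fun x hx => ?_) (fun y _ => ?_)
  · rw [Nat.mem_antidiagonalTuple] at hy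
    simp only [walkTuples, mem_filter, Nat.mem_antidiagonalTuple, sum_withZeroSet,
      filter_withZeroSet_eq_zero, hA, and_true]
    omega
  · have hsum : ∑ i, x i = n - 1 := by
      simp only [walkTuples, mem_filter, Nat.mem_antidiagonalTuple] at hx
      exact hx.1.1
    rw [← (finSumEquivOfFinset hA hAc).sum_comp, Fintype.sum_sum_type] at hsum
    simp only [finSumEquivOfFinset_inl, finSumEquivOfFinset_inr] at hsum
    rw [sum_eq_zero fun a _ => (hzero x hx _).2 (orderEmbOfFin_mem A hA a), zero_add] at hsum
    rw [← sum_congr rfl fun j _ => hcompl x hx j, sum_add_distrib, sum_const, card_univ,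
      Fintype.card_fin, smul_eq_mul, mul_one] at hsum
    rw [Nat.mem_antidiagonalTuple]
    omega
  · funext j
    simp
  · funext i
    obtain ⟨a | j, rfl⟩ := (finSumEquivOfFinset hA hAc).surjective i
    · simp [(hzero x hx _).2 (orderEmbOfFin_mem A hA a)]
    · simp [hcompl x hx j]
  · exact (prod_withZeroSet hA hAc y f).symm

theorem sum_walkTuples_prod {R : Type*} [CommSemiring R] (f : ℕ → R) {n k : ℕ}
    (hk : 1 ≤ k) (hkn : k ≤ n) :
    ∑ x ∈ walkTuples n k, ∏ i, f (x i) =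
      n.choose k * f 0 ^ k * ∑ y ∈ Nat.antidiagonalTuple (n - k) (k - 1), ∏ j, f (y j + 1) := by
  rw [← sum_fiberwise_of_maps_to (s := walkTuples n k) (t := powersetCard k univ)
      (g := fun x => ({i | x i = 0} : Finset (Fin n)))
      (fun x hx => mem_powersetCard_univ.2 (mem_filter.1 hx).2) fun x => ∏ i, f (x i),
    sum_congr rfl fun A hA =>
      sum_walkTuples_filter_zeroSet f hk hkn (mem_powersetCard_univ.1 hA),
    sum_const, card_powersetCard, card_univ, Fintype.card_fin, nsmul_eq_mul, mul_assoc]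

theorem filter_piFinset_range_eq_antidiagonalTuple (m s : ℕ) :
    {y ∈ Fintype.piFinset fun _ : Fin m => range (s + 1) | ∑ i, y i = s} =
      Nat.antidiagonalTuple m s := by
  ext y
  simp only [mem_filter, Fintype.mem_piFinset, mem_range, Nat.mem_antidiagonalTuple,
    and_iff_right_iff_imp]
  exact fun hy i =>
    Nat.lt_succ_of_le (hy ▸ single_le_sum (fun j _ => Nat.zero_le (y j)) (mem_univ i))

/-- For an offspring distribution `μ` with `μ(1) > 0`, a `μ`-BGW tree `T`, the walk `W'`
with i.i.d. steps of law `ν'(i) = μ(i+1)/(1-μ(0))`, and `B_n ~ Binomial(n, μ(0))`: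
`P(T has n vertices and k leaves) = (1/n)·P(B_n = k)·P(W'_{n-k} = k-1)`. -/
theorem stmt_12 (μ : ℕ → ℝ) (hpos : ∀ i, 0 ≤ μ i) (hsum : HasSum μ 1)
    (hμ1 : 0 < μ 1) (n k : ℕ) (hk : 1 ≤ k) (hkn : k ≤ n) :
    (∑' τ : PTree, if τ.size = n ∧ τ.leaves = k then τ.weight μ else 0)
      = (1 / (n : ℝ)) * ((Nat.choose n k : ℝ) * μ 0 ^ k * (1 - μ 0) ^ (n - k)) *
        (∑ y ∈ (Fintype.piFinset fun _ : Fin (n - k) => Finset.range k).filter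
            (fun y => ∑ i, y i = k - 1),
          ∏ i : Fin (n - k), μ (y i + 1) / (1 - μ 0)) := by
  have hμ0 : μ 0 < 1 := by
    have h := sum_le_hasSum {0, 1} (fun i _ => hpos i) hsum
    rw [sum_pair zero_ne_one] at h
    linarith
  have htsum : (∑' τ : PTree, if τ.size = n ∧ τ.leaves = k then τ.weight μ else 0) =
      ∑ τ ∈ PTree.sizeLeavesFinset n k, τ.weight μ := by
    rw [tsum_eq_sum fun τ hτ => if_neg (mt PTree.mem_sizeLeavesFinset.2 hτ),
      sum_ite_of_true fun τ hτ => PTree.mem_sizeLeavesFinset.1 hτ]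
  have hcount := PTree.natCast_mul_sum_weight μ (by omega : 0 < n) k
  rw [sum_walkTuples_prod μ hk hkn] at hcount
  have hwalk := filter_piFinset_range_eq_antidiagonalTuple (n - k) (k - 1)
  rw [Nat.sub_add_cancel hk] at hwalk
  simp_rw [htsum, hwalk, prod_div_distrib, prod_const, card_univ, Fintype.card_fin, ← sum_div]
  have : (n : ℝ) ≠ 0 := by exact_mod_cast (by omega : n ≠ 0)
  have : (1 - μ 0) ^ (n - k) ≠ 0 := pow_ne_zero _ (by linarith)
  field_simp
  linear_combination hcount
end

section
/- Let F(z) = c·exp(Σ_{i=1}^p a_i z^i) with c > 0, a_i ≥ 0, a_p > 0, gcd{j : a_j ≠ 0} = 1, and fix integers k ≥ 1 and 1 ≤ m < k. With e^m_n = [z^n]F(z)^m, the ratio e^m_n / e^{m+1}_n → 0 as n → ∞. -/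
/-!
With `E q n = iteratedDeriv n ((c * exp P) ^ q) 0`, the identity
`((c * exp P) ^ q)' = q P' (c * exp P) ^ q` and Leibniz' rule give the recurrence
`E q (n + 1) = ∑ i ≤ n, (n choose i) q bᵢ E q (n - i)` with `bᵢ = i! [xⁱ] P' ≥ 0`, and `bᵢ = 0` for
`i ≥ p`. Comparing the recurrences for `q = m` and `q = m + 1` term by term, every step gains a
factor `m / (m + 1)` while lowering the index by at most `p`, so
`E m n ≤ c⁻¹ (m / (m + 1)) ^ (n / p) E (m + 1) n`, and the ratio tends to `0`.
-/

open Filter Polynomial Finset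
open scoped Nat

namespace Polynomial

variable {𝕜 : Type*} [NontriviallyNormedField 𝕜]

theorem iteratedDeriv_eval (P : 𝕜[X]) (n : ℕ) :
    iteratedDeriv n (fun x => P.eval x) = fun x => (derivative^[n] P).eval x := by
  induction n generalizing P with
  | zero => rfl
  | succ n ih =>
    have hderiv : deriv (fun x => P.eval x) = fun x => P.derivative.eval x := by
      ext x
      exact P.deriv
    rw [iteratedDeriv_succ', hderiv, ih, Function.iterate_succ_apply]

theorem iteratedDeriv_eval_zero (P : 𝕜[X]) (n : ℕ) :
    iteratedDeriv n (fun x => P.eval x) 0 = n ! * P.coeff n := by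
  rw [iteratedDeriv_eval]
  dsimp only
  rw [← coeff_zero_eq_eval_zero, coeff_iterate_derivative, zero_add,
    Nat.descFactorial_self, nsmul_eq_mul]

end Polynomial

theorem deriv_const_mul_exp_eval_pow (c : ℝ) (P : ℝ[X]) (q : ℕ) :
    deriv (fun x => (c * Real.exp (P.eval x)) ^ q) =
      fun x => q * P.derivative.eval x * (c * Real.exp (P.eval x)) ^ q := by
  have hfun : (fun x => (c * Real.exp (P.eval x)) ^ q) =
      fun x => c ^ q * Real.exp (q * P.eval x) := by
    funext x
    rw [mul_pow, ← Real.exp_nat_mul]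
  funext x
  rw [hfun, (((P.hasDerivAt x).const_mul (q : ℝ)).exp.const_mul (c ^ q)).deriv, mul_pow,
    ← Real.exp_nat_mul]
  ring

theorem iteratedDeriv_succ_const_mul_exp_eval_pow_zero (c : ℝ) (P : ℝ[X]) (q n : ℕ) :
    iteratedDeriv (n + 1) (fun x => (c * Real.exp (P.eval x)) ^ q) 0 =
      ∑ i ∈ range (n + 1), n.choose i * (q * (i ! * P.derivative.coeff i)) *
        iteratedDeriv (n - i) (fun x => (c * Real.exp (P.eval x)) ^ q) 0 := by
  have hP : ∀ Q : ℝ[X], AnalyticAt ℝ (fun x => Q.eval x) 0 := fun Q =>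
    AnalyticOnNhd.eval_polynomial (𝕜 := ℝ) Q 0 trivial
  have hanalytic : AnalyticAt ℝ (fun x => (c * Real.exp (P.eval x)) ^ q) 0 := by
    have := hP P
    fun_prop
  have hlin : AnalyticAt ℝ (fun x => q * P.derivative.eval x) 0 := by
    have := hP P.derivative
    fun_prop
  rw [iteratedDeriv_succ', deriv_const_mul_exp_eval_pow,
    iteratedDeriv_fun_mul hlin.contDiffAt hanalytic.contDiffAt]
  refine sum_congr rfl fun i _ => ?_
  rw [iteratedDeriv_const_mul_field, iteratedDeriv_eval_zero]

section BinomialRecurrence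

variable {a a' u v : ℕ → ℝ}

theorem nonneg_of_binomial_recurrence (ha : ∀ i, 0 ≤ a i)
    (hu : ∀ n, u (n + 1) = ∑ i ∈ range (n + 1), n.choose i * a i * u (n - i))
    (hu0 : 0 ≤ u 0) (n : ℕ) : 0 ≤ u n := by
  induction n using Nat.strong_induction_on with
  | _ n ih =>
    cases n with
    | zero => exact hu0
    | succ n =>
      rw [hu]
      exact sum_nonneg fun i _ =>
        mul_nonneg (mul_nonneg (Nat.cast_nonneg _) (ha i)) (ih _ (by omega))

theorem le_mul_pow_div_mul_of_binomial_recurrence {d : ℕ} {r K : ℝ} (hr0 : 0 ≤ r) (hr1 : r ≤ 1)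
    (hK : 0 ≤ K) (ha : ∀ i, 0 ≤ a i) (ha' : ∀ i, 0 ≤ a' i) (hle : ∀ i, a i ≤ r * a' i)
    (ha'd : ∀ i, d ≤ i → a' i = 0)
    (hu : ∀ n, u (n + 1) = ∑ i ∈ range (n + 1), n.choose i * a i * u (n - i))
    (hv : ∀ n, v (n + 1) = ∑ i ∈ range (n + 1), n.choose i * a' i * v (n - i))
    (hv_nonneg : ∀ n, 0 ≤ v n) (h0 : u 0 ≤ K * v 0) (n : ℕ) :
    u n ≤ K * r ^ (n / d) * v n := by
  induction n using Nat.strong_induction_on with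
  | _ n ih =>
    cases n with
    | zero => simpa using h0
    | succ n =>
      rw [hu, hv, mul_sum]
      refine sum_le_sum fun i _ => ?_
      rcases lt_or_ge i d with hid | hid
      · have hexp : (n + 1) / d ≤ (n - i) / d + 1 := calc
          (n + 1) / d ≤ (n - i + d) / d := Nat.div_le_div_right (by omega)
          _ = (n - i) / d + 1 := Nat.add_div_right _ (by omega)
        have hai := ha i
        have hai' := ha' i
        have hvi := hv_nonneg (n - i)
        calc n.choose i * a i * u (n - i)
            ≤ n.choose i * a i * (K * r ^ ((n - i) / d) * v (n - i)) := by
              gcongr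
              exact ih _ (by omega)
          _ ≤ n.choose i * (r * a' i) * (K * r ^ ((n - i) / d) * v (n - i)) := by
              gcongr
              exact hle i
          _ = K * r ^ ((n - i) / d + 1) * (n.choose i * a' i * v (n - i)) := by ring
          _ ≤ K * r ^ ((n + 1) / d) * (n.choose i * a' i * v (n - i)) :=
              mul_le_mul_of_nonneg_right
                (mul_le_mul_of_nonneg_left (pow_le_pow_of_le_one hr0 hr1 hexp) hK) (by positivity)
      · have hai : a i = 0 := le_antisymm (by simpa [ha'd i hid] using hle i) (ha i)
        simp only [hai, ha'd i hid, mul_zero, zero_mul, le_refl]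

theorem tendsto_div_of_binomial_recurrence {d : ℕ} (hd : 0 < d) {c : ℝ} (hc : 0 < c)
    {b : ℕ → ℝ} (hb : ∀ i, 0 ≤ b i) (hbd : ∀ i, d ≤ i → b i = 0) {E : ℕ → ℕ → ℝ}
    (hrec : ∀ q n, E q (n + 1) = ∑ i ∈ range (n + 1), n.choose i * (q * b i) * E q (n - i))
    (hE0 : ∀ q, E q 0 = c ^ q) (m : ℕ) :
    Tendsto (fun n => E m n / E (m + 1) n) atTop (nhds 0) := by
  have hE_nonneg : ∀ q n, 0 ≤ E q n := fun q =>
    nonneg_of_binomial_recurrence (fun i => mul_nonneg q.cast_nonneg (hb i)) (hrec q)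
      (hE0 q ▸ by positivity)
  set r : ℝ := m / (m + 1)
  have hr : r * (m + 1) = m := div_mul_cancel₀ _ (by positivity)
  have hr1 : r < 1 := (div_lt_one (by positivity)).2 (by linarith)
  have hbound : ∀ n, E m n ≤ c⁻¹ * r ^ (n / d) * E (m + 1) n :=
    le_mul_pow_div_mul_of_binomial_recurrence (by positivity) hr1.le (by positivity)
      (fun i => mul_nonneg m.cast_nonneg (hb i)) (fun i => mul_nonneg (by positivity) (hb i))
      (fun i => by rw [← mul_assoc r, Nat.cast_succ, hr])
      (fun i hi => by rw [hbd i hi, mul_zero]) (hrec m) (hrec (m + 1)) (hE_nonneg (m + 1))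
      (by rw [hE0, hE0, pow_succ, mul_comm, mul_inv_cancel_right₀ hc.ne'])
  have hlim : Tendsto (fun n => c⁻¹ * r ^ (n / d)) atTop (nhds 0) := by
    simpa using ((tendsto_pow_atTop_nhds_zero_of_lt_one (by positivity) hr1).comp
      (Nat.tendsto_div_const_atTop hd.ne')).const_mul c⁻¹
  refine squeeze_zero (fun n => ?_) (fun n => ?_) hlim
  · exact div_nonneg (hE_nonneg m n) (hE_nonneg (m + 1) n)
  · exact div_le_of_le_mul₀ (hE_nonneg (m + 1) n) (by positivity) (hbound n)

end BinomialRecurrence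

theorem stmt_18_general (p : ℕ) (hp : 0 < p) (c : ℝ) (hc : 0 < c) (P : Polynomial ℝ)
    (hdeg : P.natDegree = p) (hnonneg : ∀ i, 0 ≤ P.coeff i) (h0 : P.coeff 0 = 0)
    (m : ℕ) (e : ℕ → ℕ → ℝ)
    (he : ∀ q n : ℕ, e q n =
      iteratedDeriv n (fun x => (c * Real.exp (P.eval x)) ^ q) 0 / n.factorial) :
    Tendsto (fun n : ℕ => e m n / e (m + 1) n) atTop (nhds 0) := by
  set b : ℕ → ℝ := fun i => i ! * P.derivative.coeff i
  have hb : ∀ i, 0 ≤ b i := fun i => by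
    simp only [b, coeff_derivative]
    have := hnonneg (i + 1)
    positivity
  have hbp : ∀ i, p ≤ i → b i = 0 := fun i hi => by
    simp [b, coeff_derivative, coeff_eq_zero_of_natDegree_lt (show P.natDegree < i + 1 by omega)]
  set E : ℕ → ℕ → ℝ := fun q n => iteratedDeriv n (fun x => (c * Real.exp (P.eval x)) ^ q) 0
  have hE0 : ∀ q, E q 0 = c ^ q := fun q => by
    simp [E, ← coeff_zero_eq_eval_zero, h0]
  refine (tendsto_div_of_binomial_recurrence (E := E) hp hc hb hbp
    (iteratedDeriv_succ_const_mul_exp_eval_pow_zero c P) hE0 m).congr fun n => ?_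
  rw [he, he, div_div_div_cancel_right₀ (by positivity)]

/-- Let `F(z) = c·exp(Σ_{i=1}^p a_i z^i)` with `c > 0`, `a_i ≥ 0`, `a_p > 0`, and
`gcd{j : a_j ≠ 0} = 1`, and fix `k ≥ 1`, `1 ≤ m < k`. With `e^m_n = [z^n] F(z)^m`, the
ratio `e^m_n / e^{m+1}_n` tends to `0` as `n → ∞`. -/
theorem stmt_18 (p : ℕ) (hp : 0 < p) (c : ℝ) (hc : 0 < c) (P : Polynomial ℝ)
    (hdeg : P.natDegree = p) (hnonneg : ∀ i, 0 ≤ P.coeff i) (h0 : P.coeff 0 = 0)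
    (hap : 0 < P.coeff p) (hgcd : P.support.gcd id = 1)
    (k m : ℕ) (hk : 1 ≤ k) (hm : 1 ≤ m) (hmk : m < k) (e : ℕ → ℕ → ℝ)
    (he : ∀ q n : ℕ, e q n =
      iteratedDeriv n (fun x => (c * Real.exp (P.eval x)) ^ q) 0 / n.factorial) :
    Tendsto (fun n : ℕ => e m n / e (m + 1) n) atTop (nhds 0) :=
  stmt_18_general p hp c hc P hdeg hnonneg h0 m e he
end
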